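/- arXiv:2103.04497 — 4 statements merged into one kernel-verified Lean document; each statement's English description precedes it below -/
import Mathlib

section
/- Let (X,d) be a compact metric space and T: X → X a homeomorphism. Let ε, δ > 0 and set a = sup_{x ∈ X} S(B_δ(x, d_ℤ), ε/4), where S(K, ε') = limsup_{N→∞} (1/N) log #(K, d_N, ε'). Then for every β > 0 there exists a constant C = C(ε, δ, β) > 0 such that for all natural numbers n, sup_{x ∈ X} #(B_δ(x, d_n), d_n, ε) ≤ C · e^{(a+β)n}. -/
open Filter Set MeasureTheory

/-- Minimal cardinality of an `ε`-spanning set of `K` w.r.t. the (pseudo)metric `ρ`. -/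
noncomputable def spanNum {X : Type*} (ρ : X → X → ℝ) (K : Set X) (ε : ℝ) : ℕ :=
  sInf {n : ℕ | ∃ S : Finset X, S.card = n ∧ ∀ x ∈ K, ∃ y ∈ S, ρ x y ≤ ε}

/-- `d_Ω(x,y) = sup_{n ∈ Ω} d(Tⁿx, Tⁿy)` for a homeomorphism `T` and `Ω ⊆ ℤ`. -/
noncomputable def dOmZ {X : Type*} [MetricSpace X] (T : X ≃ₜ X) (Ω : Set ℤ) (x y : X) : ℝ :=
  ⨆ n : Ω, dist ((T.toEquiv ^ (n : ℤ)) x) ((T.toEquiv ^ (n : ℤ)) y)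

/-- `d_N(x,y) = max_{0 ≤ n < N} d(Tⁿx, Tⁿy)`. -/
noncomputable def dN {X : Type*} [MetricSpace X] (T : X ≃ₜ X) (N : ℕ) : X → X → ℝ :=
  dOmZ T {n : ℤ | 0 ≤ n ∧ n < (N : ℤ)}

/-- Entropy of `K` at scale `ε`: `limsup_{N→∞} (1/N) log #(K, d_N, ε)`. -/
noncomputable def entS {X : Type*} [MetricSpace X] (T : X ≃ₜ X) (K : Set X) (ε : ℝ) : ℝ :=
  limsup (fun N : ℕ => Real.log (spanNum (dN T N) K ε) / N) atTop

/-- The Bowen ball `B_δ(x, d_ℤ)`. -/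
def bowenBallZ {X : Type*} [MetricSpace X] (T : X ≃ₜ X) (δ : ℝ) (x : X) : Set X :=
  {y | dOmZ T univ x y ≤ δ}

/-- Upper metric mean dimension. -/
noncomputable def mdimMUpper {X : Type*} [MetricSpace X] (T : X ≃ₜ X) : ℝ :=
  limsup (fun ε : ℝ => entS T univ ε / Real.log (1 / ε)) (nhdsWithin 0 (Set.Ioi 0))

/-- Lower metric mean dimension. -/
noncomputable def mdimMLower {X : Type*} [MetricSpace X] (T : X ≃ₜ X) : ℝ :=
  liminf (fun ε : ℝ => entS T univ ε / Real.log (1 / ε)) (nhdsWithin 0 (Set.Ioi 0))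

/-!
Put `c = a + β / 2`. For each `z`, `S(B_δ(z, d_ℤ), ε/4) < c` yields a time `m` and an
`ε/4`-spanning set `E` of `B_δ(z, d_ℤ)` for `d_m` with `#E ≤ e^{cm}`. Since `B_δ(z, d_ℤ)` is the
decreasing intersection of the closed sets of points `(δ + 1/(k+1))`-close to `z` along `[-k, k]`,
compactness shows that `E` still `ε/2`-shadows, during `m` steps, every point whose orbit is that
close to the orbit of `z` on a finite window `[-k, k]`; a finite cover of `X` makes `m` and `k`
uniformly bounded. Then `[0, n)` is cut into consecutive blocks starting at times `τ` with
`k ≤ τ < n - k`, and a point of the Bowen ball `{y | d_n(x, y) ≤ δ}` is determined up to `ε` by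
its shadowing words along the blocks and by net points at the at most `2k` uncovered times. The
product of the bounds `e^{cm}` over the blocks is at most `e^{c(n + M)}`.
-/

open Topology

lemma Homeomorph.toEquiv_zpow_apply {X : Type*} [TopologicalSpace X] (T : X ≃ₜ X) (k : ℤ)
    (x : X) : (T.toEquiv ^ k) x = (T ^ k) x :=
  congrArg (· x)
    (map_zpow (⟨⟨Homeomorph.toEquiv, rfl⟩, fun _ _ => rfl⟩ : (X ≃ₜ X) →* Equiv.Perm X) T k).symm

section Spanning

variable {X : Type*}

def IsSpanning (ρ : X → X → ℝ) (K : Set X) (ε : ℝ) (F : Finset X) : Prop :=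
  ∀ x ∈ K, ∃ y ∈ F, ρ x y ≤ ε

variable {ρ : X → X → ℝ} {K : Set X} {ε : ℝ}

lemma spanNum_le_card {F : Finset X} (hF : IsSpanning ρ K ε F) : spanNum ρ K ε ≤ F.card :=
  Nat.sInf_le ⟨F, rfl, hF⟩

lemma exists_isSpanning_card_eq_spanNum (h : ∃ F, IsSpanning ρ K ε F) :
    ∃ F, IsSpanning ρ K ε F ∧ F.card = spanNum ρ K ε := by
  obtain ⟨F, hF⟩ := h
  obtain ⟨F', hcard, hF'⟩ :=
    Nat.sInf_mem (s := {n | ∃ F : Finset X, F.card = n ∧ IsSpanning ρ K ε F}) ⟨F.card, F, rfl, hF⟩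
  exact ⟨F', hF', hcard⟩

lemma exists_isSpanning_card_le_of_code {A : Type*} (w : X → A) (S : Finset A)
    (hw : MapsTo w K S) (hfib : ∀ y ∈ K, ∀ y' ∈ K, w y = w y' → ρ y y' ≤ ε) :
    ∃ F, IsSpanning ρ K ε F ∧ F.card ≤ S.card := by
  classical
  rcases isEmpty_or_nonempty X with hX | hX
  · exact ⟨∅, fun y => isEmptyElim y, by simp⟩
  refine ⟨S.image (Function.invFunOn w K), fun y hy => ?_, Finset.card_image_le⟩
  have hex : ∃ y' ∈ K, w y' = w y := ⟨y, hy, rfl⟩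
  exact ⟨_, Finset.mem_image_of_mem _ (hw hy),
    hfib y hy _ (Function.invFunOn_mem hex) (Function.invFunOn_eq hex).symm⟩

end Spanning

section Blocks

variable (ℓ : ℕ → ℕ) (t₀ : ℕ)

def blockStart : ℕ → ℕ
  | 0 => t₀
  | j + 1 => blockStart j + ℓ (blockStart j)

lemma blockStart_eq_add_sum (p : ℕ) :
    blockStart ℓ t₀ p = t₀ + ∑ j ∈ Finset.range p, ℓ (blockStart ℓ t₀ j) := by
  induction p with
  | zero => rfl
  | succ p ih => rw [Finset.sum_range_succ, ← add_assoc, ← ih]; rfl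

lemma le_blockStart (j : ℕ) : t₀ ≤ blockStart ℓ t₀ j :=
  (blockStart_eq_add_sum ℓ t₀ j).ge.trans' le_self_add

variable {ℓ t₀}

lemma exists_mem_block {s : ℕ} (h₀ : t₀ ≤ s) :
    ∀ {p}, s < blockStart ℓ t₀ p → ∃ j < p, blockStart ℓ t₀ j ≤ s ∧ s < blockStart ℓ t₀ (j + 1)
  | 0, hs => absurd h₀ (not_le.2 hs)
  | p + 1, hs => by
    by_cases h : blockStart ℓ t₀ p ≤ s
    · exact ⟨p, lt_add_one p, h, hs⟩
    · obtain ⟨j, hj, hjs⟩ := exists_mem_block h₀ (not_le.1 h)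
      exact ⟨j, hj.trans (lt_add_one p), hjs⟩

lemma exists_blockCount (hℓ : ∀ τ, 1 ≤ ℓ τ) {M : ℕ} (hM : ∀ τ, ℓ τ ≤ M) (K n : ℕ) :
    ∃ p, (∀ j < p, blockStart ℓ K j + K < n) ∧ n ≤ blockStart ℓ K p + K ∧
      ∑ j ∈ Finset.range p, ℓ (blockStart ℓ K j) ≤ n + M := by
  have hgrow : ∀ j, K + j ≤ blockStart ℓ K j := fun j => by
    induction j with
    | zero => rfl
    | succ j ih => have := hℓ (blockStart ℓ K j); change _ ≤ _ + _; omega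
  have hex : ∃ p, n ≤ blockStart ℓ K p + K := ⟨n, by linarith [hgrow n]⟩
  refine ⟨Nat.find hex, fun j hj => not_le.1 (Nat.find_min hex hj), Nat.find_spec hex, ?_⟩
  cases hp : Nat.find hex with
  | zero => simp
  | succ q =>
    have hlast := not_le.1 (Nat.find_min hex (hp ▸ lt_add_one q))
    have hsum := blockStart_eq_add_sum ℓ K q
    have hlen := hM (blockStart ℓ K q)
    rw [Finset.sum_range_succ]
    omega

end Blocks

section Orbits

variable {X : Type*} [MetricSpace X] (T : X ≃ₜ X)

lemma dOmZ_eq_iSup (Ω : Set ℤ) (x y : X) :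
    dOmZ T Ω x y = ⨆ k : Ω, dist ((T ^ (k : ℤ)) x) ((T ^ (k : ℤ)) y) := by
  simp only [dOmZ, Homeomorph.toEquiv_zpow_apply]

variable {T}

lemma dOmZ_le {Ω : Set ℤ} {x y : X} {c : ℝ} (hc : 0 ≤ c)
    (h : ∀ k ∈ Ω, dist ((T ^ k) x) ((T ^ k) y) ≤ c) : dOmZ T Ω x y ≤ c := by
  rw [dOmZ_eq_iSup]
  exact Real.iSup_le (fun k => h k k.2) hc

lemma dist_le_dOmZ [BoundedSpace X] {Ω : Set ℤ} {k : ℤ} (hk : k ∈ Ω) (x y : X) :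
    dist ((T ^ k) x) ((T ^ k) y) ≤ dOmZ T Ω x y := by
  rw [dOmZ_eq_iSup]
  refine le_ciSup (f := fun k : Ω => dist ((T ^ (k : ℤ)) x) ((T ^ (k : ℤ)) y)) ?_ ⟨k, hk⟩
  exact ⟨Metric.diam (univ : Set X), forall_mem_range.2 fun _ =>
    Metric.dist_le_diam_of_mem BoundedSpace.bounded_univ (mem_univ _) (mem_univ _)⟩

lemma mem_bowenBallZ_of_forall {δ : ℝ} {x y : X}
    (h : ∀ k : ℤ, dist ((T ^ k) x) ((T ^ k) y) ≤ δ) : y ∈ bowenBallZ T δ x := by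
  change dOmZ T univ x y ≤ δ
  rw [dOmZ_eq_iSup]
  exact ciSup_le fun k => h k

lemma dN_le {N : ℕ} {x y : X} {c : ℝ} (hc : 0 ≤ c)
    (h : ∀ u < N, dist ((T ^ u) x) ((T ^ u) y) ≤ c) : dN T N x y ≤ c := by
  refine dOmZ_le hc fun k hk => ?_
  obtain ⟨hk0, hkN⟩ := hk
  lift k to ℕ using hk0
  simpa using h k (by exact_mod_cast hkN)

lemma dist_zpow_le_dN [BoundedSpace X] {N : ℕ} {k : ℤ} (hk0 : 0 ≤ k) (hkN : k < N) (x y : X) :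
    dist ((T ^ k) x) ((T ^ k) y) ≤ dN T N x y :=
  dist_le_dOmZ (Ω := {n : ℤ | 0 ≤ n ∧ n < N}) ⟨hk0, hkN⟩ x y

lemma dist_pow_le_dN [BoundedSpace X] {N u : ℕ} (hu : u < N) (x y : X) :
    dist ((T ^ u) x) ((T ^ u) y) ≤ dN T N x y := by
  simpa using dist_zpow_le_dN (T := T) (Int.natCast_nonneg u) (by exact_mod_cast hu) x y

lemma dist_zpow_zpow_le_of_dN_le [BoundedSpace X] {n K τ : ℕ} {x y : X} {δ : ℝ}
    (h : dN T n x y ≤ δ) (hτ : K ≤ τ) (hτn : τ + K < n) {s : ℤ} (hs : |s| ≤ K) :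
    dist ((T ^ s) ((T ^ τ) y)) ((T ^ s) ((T ^ τ) x)) ≤ δ := by
  rw [← Homeomorph.mul_apply, ← Homeomorph.mul_apply, ← zpow_natCast, ← zpow_add, dist_comm]
  obtain ⟨hs₁, hs₂⟩ := abs_le.1 hs
  exact (dist_zpow_le_dN (by omega) (by omega) x y).trans h

lemma dN_le_of_forall_block {ℓ : ℕ → ℕ} {K p n : ℕ} (hn : n ≤ blockStart ℓ K p + K)
    {x y : X} {ε : ℝ} (hε : 0 ≤ ε) (hhead : ∀ i < K, dist ((T ^ i) x) ((T ^ i) y) ≤ ε)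
    (htail : ∀ i < K,
      dist ((T ^ (blockStart ℓ K p + i)) x) ((T ^ (blockStart ℓ K p + i)) y) ≤ ε)
    (hblock : ∀ j < p, ∀ u < ℓ (blockStart ℓ K j),
      dist ((T ^ u) ((T ^ blockStart ℓ K j) x)) ((T ^ u) ((T ^ blockStart ℓ K j) y)) ≤ ε) :
    dN T n x y ≤ ε := by
  refine dN_le hε fun s hs => ?_
  by_cases hsK : s < K
  · exact hhead s hsK
  by_cases hsp : blockStart ℓ K p ≤ s
  · obtain ⟨i, rfl⟩ := Nat.exists_eq_add_of_le hsp
    exact htail i (by omega)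
  obtain ⟨j, hj, hjs, hsj⟩ := exists_mem_block (not_lt.1 hsK) (not_le.1 hsp)
  obtain ⟨u, rfl⟩ := Nat.exists_eq_add_of_le hjs
  rw [add_comm, pow_add]
  exact hblock j hj u (by rw [blockStart] at hsj; omega)

end Orbits

lemma exists_finset_forall_dist_le (X : Type*) [MetricSpace X] [CompactSpace X] {r : ℝ}
    (hr : 0 < r) : ∃ (G : Finset X) (g : X → X), ∀ w, g w ∈ G ∧ dist w (g w) ≤ r := by
  obtain ⟨t, -, ht, hcover⟩ := finite_cover_balls_of_compact (isCompact_univ (X := X)) hr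
  have : ∀ w : X, ∃ g ∈ t, dist w g ≤ r := fun w => by
    obtain ⟨g, hg, hwg⟩ := mem_iUnion₂.1 (hcover (mem_univ w))
    exact ⟨g, hg, (Metric.mem_ball.1 hwg).le⟩
  choose g hgt hg using this
  exact ⟨ht.toFinset, g, fun w => ⟨ht.mem_toFinset.2 (hgt w), hg w⟩⟩

section Compact

variable {X : Type*} [MetricSpace X] [CompactSpace X]

/-- Coding each coordinate of the orbit by a point of a finite `r / 2`-net. -/
lemma exists_isSpanning_dN_card_le_pow (T : X ≃ₜ X) {r : ℝ} (hr : 0 < r) :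
    ∃ L : ℕ, ∀ (K : Set X) (N : ℕ), ∃ F, IsSpanning (dN T N) K r F ∧ F.card ≤ L ^ N := by
  obtain ⟨G, g, hg⟩ := exists_finset_forall_dist_le X (half_pos hr)
  refine ⟨G.card, fun K N => ?_⟩
  have hcode := exists_isSpanning_card_le_of_code (ρ := dN T N) (K := K) (ε := r)
    (fun y (u : Fin N) => g ((T ^ (u : ℕ)) y)) (Fintype.piFinset fun _ => G)
    (fun y _ => Fintype.mem_piFinset.2 fun u => (hg _).1) fun y _ y' _ hyy' => by
      refine dN_le hr.le fun u hu => ?_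
      have hgu : g ((T ^ u) y) = g ((T ^ u) y') := congrFun hyy' ⟨u, hu⟩
      calc dist ((T ^ u) y) ((T ^ u) y')
          ≤ dist ((T ^ u) y) (g ((T ^ u) y)) + dist ((T ^ u) y') (g ((T ^ u) y')) := by
            rw [hgu]; exact dist_triangle_right _ _ _
        _ ≤ r / 2 + r / 2 := add_le_add (hg _).2 (hg _).2
        _ = r := add_halves r
  simpa only [Fintype.card_piFinset_const] using hcode

lemma exists_forall_log_spanNum_dN_div_le (T : X ≃ₜ X) {r : ℝ} (hr : 0 < r) :
    ∃ b : ℝ, ∀ (K : Set X) (N : ℕ), Real.log (spanNum (dN T N) K r) / N ≤ b := by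
  obtain ⟨L, hL⟩ := exists_isSpanning_dN_card_le_pow T hr
  refine ⟨Real.log L, fun K N => div_le_of_le_mul₀ N.cast_nonneg (Real.log_natCast_nonneg L) ?_⟩
  obtain ⟨F, hF, hcard⟩ := hL K N
  have hle : (spanNum (dN T N) K r : ℝ) ≤ (L : ℝ) ^ N := by
    exact_mod_cast (spanNum_le_card hF).trans hcard
  rcases (spanNum (dN T N) K r).eq_zero_or_pos with h0 | hpos
  · rw [h0, Nat.cast_zero, Real.log_zero]
    exact mul_nonneg (Real.log_natCast_nonneg L) N.cast_nonneg
  · calc Real.log (spanNum (dN T N) K r) ≤ Real.log ((L : ℝ) ^ N) :=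
          Real.log_le_log (by exact_mod_cast hpos) hle
      _ = Real.log L * N := by rw [Real.log_pow, mul_comm]

end Compact

section Entropy

variable {X : Type*} [MetricSpace X] {T : X ≃ₜ X} {K : Set X} {r b : ℝ}

lemma entS_nonneg (hb : ∀ N : ℕ, Real.log (spanNum (dN T N) K r) / N ≤ b) : 0 ≤ entS T K r :=
  le_limsup_of_frequently_le (Frequently.of_forall fun N =>
    div_nonneg (Real.log_natCast_nonneg _) N.cast_nonneg) (isBoundedUnder_of ⟨b, hb⟩)

lemma entS_le (hb : ∀ N : ℕ, Real.log (spanNum (dN T N) K r) / N ≤ b) : entS T K r ≤ b :=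
  limsup_le_of_le (isBoundedUnder_of ⟨0, fun N =>
    div_nonneg (Real.log_natCast_nonneg _) N.cast_nonneg⟩).isCoboundedUnder_le
    (Eventually.of_forall hb)

lemma exists_isSpanning_dN_card_le_exp_of_entS_lt [CompactSpace X] (hr : 0 < r) {c : ℝ}
    (h : entS T K r < c) :
    ∃ m ≥ 1, ∃ E : Finset X, IsSpanning (dN T m) K r E ∧ (E.card : ℝ) ≤ Real.exp (c * m) := by
  obtain ⟨b, hb⟩ := exists_forall_log_spanNum_dN_div_le T hr
  obtain ⟨L, hL⟩ := exists_isSpanning_dN_card_le_pow T hr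
  obtain ⟨m₀, hm₀⟩ :=
    eventually_atTop.1 (eventually_lt_of_limsup_lt h (isBoundedUnder_of ⟨b, hb K⟩))
  set m := max m₀ 1
  obtain ⟨F, hF, -⟩ := hL K m
  obtain ⟨E, hE, hcard⟩ := exists_isSpanning_card_eq_spanNum ⟨F, hF⟩
  refine ⟨m, le_max_right _ _, E, hE, ?_⟩
  have hm : (0 : ℝ) < m := by positivity
  have hlt := (div_lt_iff₀ hm).1 (hm₀ m (le_max_left _ _))
  rw [hcard]
  rcases (spanNum (dN T m) K r).eq_zero_or_pos with h0 | hpos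
  · rw [h0, Nat.cast_zero]; positivity
  · calc (spanNum (dN T m) K r : ℝ) = Real.exp (Real.log (spanNum (dN T m) K r)) :=
          (Real.exp_log (by exact_mod_cast hpos)).symm
      _ ≤ Real.exp (c * m) := Real.exp_le_exp.2 hlt.le

end Entropy

section Shadowing

variable {X : Type*} [MetricSpace X] [CompactSpace X] (T : X ≃ₜ X)

/-- The closed sets of points `(δ + 1 / (k + 1))`-close to `z` along `[-k, k]` decrease to
`B_δ(z, d_ℤ)`, so by compactness one of them already lies in `U`. -/
lemma exists_window_subset_of_bowenBallZ_subset {δ : ℝ} {U : Set X} (hU : IsOpen U) (z : X)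
    (hsub : bowenBallZ T δ z ⊆ U) :
    ∃ k : ℕ, ∀ y, (∀ s : ℤ, |s| ≤ k → dist ((T ^ s) y) ((T ^ s) z) ≤ δ + 1 / (k + 1)) →
      y ∈ U := by
  set V : ℕ → Set X :=
    fun k => {y | ∀ s : ℤ, |s| ≤ k → dist ((T ^ s) y) ((T ^ s) z) ≤ δ + 1 / (k + 1)}
  have hV_closed : ∀ k, IsClosed (V k) := fun k => by
    simp only [V, ofPred_forall]
    exact isClosed_iInter fun s => isClosed_iInter fun _ =>
      isClosed_le (by fun_prop) continuous_const
  have hV_anti : Antitone V := fun k k' hkk' y hy s hs => by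
    refine (hy s (hs.trans (by exact_mod_cast hkk'))).trans ?_
    gcongr
  have hV_inter : ∀ y ∈ ⋂ k, V k, U ∈ 𝓝 y := fun y hy => by
    refine hU.mem_nhds (hsub (mem_bowenBallZ_of_forall fun s => ?_))
    rw [dist_comm]
    have hlim := (tendsto_one_div_add_atTop_nhds_zero_nat (𝕜 := ℝ)).const_add δ
    rw [add_zero] at hlim
    refine ge_of_tendsto hlim ?_
    filter_upwards [eventually_ge_atTop s.natAbs] with k hk
    exact mem_iInter.1 hy k s (by rw [Int.abs_eq_natAbs]; exact_mod_cast hk)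
  exact exists_subset_nhds_of_isCompact' hV_anti.directed_ge
    (fun k => (hV_closed k).isCompact) hV_closed hV_inter

lemma exists_window_shadowing {δ r r' c : ℝ} (hr : 0 < r) (hrr' : r < r') (z : X)
    (h : entS T (bowenBallZ T δ z) r < c) :
    ∃ (m k : ℕ) (E : Finset X), 1 ≤ m ∧ (E.card : ℝ) ≤ Real.exp (c * m) ∧
      ∀ y, (∀ s : ℤ, |s| ≤ k → dist ((T ^ s) y) ((T ^ s) z) ≤ δ + 1 / (k + 1)) →
        ∃ e ∈ E, ∀ u < m, dist ((T ^ u) y) ((T ^ u) e) < r' := by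
  obtain ⟨m, hm, E, hE, hcard⟩ := exists_isSpanning_dN_card_le_exp_of_entS_lt hr h
  set U := ⋃ e ∈ E, ⋂ u ∈ Finset.range m, {y | dist ((T ^ u) y) ((T ^ u) e) < r'}
  have hU : IsOpen U := isOpen_biUnion fun e _ =>
    isOpen_biInter_finset fun u _ => isOpen_lt (by fun_prop) continuous_const
  have hBU : bowenBallZ T δ z ⊆ U := fun y hy => by
    obtain ⟨e, he, hye⟩ := hE y hy
    simp only [U, mem_iUnion, mem_iInter, Finset.mem_range, mem_ofPred_eq]
    exact ⟨e, he, fun u hu => ((dist_pow_le_dN hu y e).trans hye).trans_lt hrr'⟩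
  obtain ⟨k, hk⟩ := exists_window_subset_of_bowenBallZ_subset T hU z hBU
  refine ⟨m, k, E, hm, hcard, fun y hy => ?_⟩
  simpa [U] using hk y hy

end Shadowing

structure ShadowingData {X : Type*} [MetricSpace X] (T : X ≃ₜ X) (δ r c : ℝ) where
  window : ℕ
  maxLength : ℕ
  length : X → ℕ
  codes : X → Finset X
  shadow : X → X → X
  one_le_length : ∀ w, 1 ≤ length w
  length_le : ∀ w, length w ≤ maxLength
  card_codes_le : ∀ w, ((codes w).card : ℝ) ≤ Real.exp (c * length w)
  shadow_spec : ∀ w y, (∀ s : ℤ, |s| ≤ window → dist ((T ^ s) y) ((T ^ s) w) ≤ δ) →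
    shadow w y ∈ codes w ∧ ∀ u < length w, dist ((T ^ u) y) ((T ^ u) (shadow w y)) ≤ r

/-- Patch the windows of `exists_window_shadowing` together over a finite open cover of `X`. -/
theorem exists_shadowingData {X : Type*} [MetricSpace X] [CompactSpace X] (T : X ≃ₜ X)
    {δ r r' c : ℝ} (hr : 0 < r) (hrr' : r < r') (h : ∀ z, entS T (bowenBallZ T δ z) r < c) :
    Nonempty (ShadowingData T δ r' c) := by
  choose m k E hm hE hshadow using fun z => exists_window_shadowing T hr hrr' z (h z)
  set V : X → Set X := fun z =>
    ⋂ s ∈ Finset.Icc (-(k z : ℤ)) (k z), {w | dist ((T ^ s) w) ((T ^ s) z) < 1 / (k z + 1)}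
  have hV_open : ∀ z, IsOpen (V z) := fun z =>
    isOpen_biInter_finset fun s _ => isOpen_lt (by fun_prop) continuous_const
  obtain ⟨t, ht⟩ := isCompact_univ.elim_finite_subcover V hV_open fun w _ =>
    mem_iUnion.2 ⟨w, by simp only [V, mem_iInter, dist_self, mem_ofPred_eq]; intros; positivity⟩
  have hcover : ∀ w, ∃ z ∈ t, w ∈ V z := fun w => by simpa using ht (mem_univ w)
  choose ζ hζt hζV using hcover
  have hζk : ∀ w, k (ζ w) ≤ t.sup k := fun w => Finset.le_sup (hζt w)
  have hshadow' : ∀ w y, ∃ e, (∀ s : ℤ, |s| ≤ t.sup k → dist ((T ^ s) y) ((T ^ s) w) ≤ δ) →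
      e ∈ E (ζ w) ∧ ∀ u < m (ζ w), dist ((T ^ u) y) ((T ^ u) e) ≤ r' := fun w y => by
    by_cases hy : ∀ s : ℤ, |s| ≤ t.sup k → dist ((T ^ s) y) ((T ^ s) w) ≤ δ
    · obtain ⟨e, he, hye⟩ := hshadow (ζ w) y fun s hs => by
        have hs' : |s| ≤ t.sup k := hs.trans (by exact_mod_cast hζk w)
        have hwζ : dist ((T ^ s) w) ((T ^ s) (ζ w)) < 1 / (k (ζ w) + 1) := by
          have := hζV w
          simp only [V, mem_iInter, Finset.mem_Icc, mem_ofPred_eq] at this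
          exact this s (abs_le.1 hs)
        linarith [dist_triangle ((T ^ s) y) ((T ^ s) w) ((T ^ s) (ζ w)), hy s hs']
      exact ⟨e, fun _ => ⟨he, fun u hu => (hye u hu).le⟩⟩
    · exact ⟨y, fun h' => absurd h' hy⟩
  choose σ hσ using hshadow'
  exact ⟨{ window := t.sup k
           maxLength := t.sup m
           length := fun w => m (ζ w)
           codes := fun w => E (ζ w)
           shadow := σ
           one_le_length := fun w => hm (ζ w)
           length_le := fun w => Finset.le_sup (hζt w)
           card_codes_le := fun w => hE (ζ w)
           shadow_spec := hσ }⟩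


namespace ShadowingData

variable {X : Type*} [MetricSpace X] {T : X ≃ₜ X} {δ ε c : ℝ}

lemma dist_le_of_shadow_eq (D : ShadowingData T δ (ε / 2) c) {w y y' : X}
    (hy : ∀ s : ℤ, |s| ≤ D.window → dist ((T ^ s) y) ((T ^ s) w) ≤ δ)
    (hy' : ∀ s : ℤ, |s| ≤ D.window → dist ((T ^ s) y') ((T ^ s) w) ≤ δ)
    (h : D.shadow w y = D.shadow w y') {u : ℕ} (hu : u < D.length w) :
    dist ((T ^ u) y) ((T ^ u) y') ≤ ε := by
  have h₁ := (D.shadow_spec w y hy).2 u hu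
  have h₂ := (D.shadow_spec w y' hy').2 u hu
  rw [← h] at h₂
  linarith [dist_triangle_right ((T ^ u) y) ((T ^ u) y') ((T ^ u) (D.shadow w y))]

/-- A point of the Bowen ball `{y | d_n(x, y) ≤ δ}` is coded by its shadowing words along
consecutive blocks of the orbit of `x`, together with net points at the first and the last
`window` times, which the blocks may miss. -/
theorem spanNum_dN_le [CompactSpace X] (D : ShadowingData T δ (ε / 2) c) (hc : 0 ≤ c)
    {G : Finset X} {g : X → X} (hg : ∀ w, g w ∈ G ∧ dist w (g w) ≤ ε / 2) (n : ℕ) (x : X) :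
    (spanNum (dN T n) {y | dN T n x y ≤ δ} ε : ℝ) ≤
      Real.exp (c * (n + D.maxLength)) * (G.card : ℝ) ^ (2 * D.window) := by
  set K := D.window
  set ℓ : ℕ → ℕ := fun τ => D.length ((T ^ τ) x)
  set t := blockStart ℓ K
  obtain ⟨p, hp_inner, hp_end, hp_sum⟩ : ∃ p, (∀ j < p, t j + K < n) ∧ n ≤ t p + K ∧
      ∑ j ∈ Finset.range p, ℓ (t j) ≤ n + D.maxLength :=
    exists_blockCount (fun τ => D.one_le_length _) (fun τ => D.length_le _) K n
  set Y := {y | dN T n x y ≤ δ}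
  have hwindow : ∀ y ∈ Y, ∀ j : Fin p, ∀ s : ℤ, |s| ≤ K →
      dist ((T ^ s) ((T ^ t j) y)) ((T ^ s) ((T ^ t j) x)) ≤ δ := fun y hy j _ hs =>
    dist_zpow_zpow_le_of_dN_le hy (le_blockStart ℓ K j) (hp_inner j j.2) hs
  set code : X → (Fin p → X) × (Fin K → X) × (Fin K → X) := fun y =>
    (fun j => D.shadow ((T ^ t j) x) ((T ^ t j) y), fun i => g ((T ^ (i : ℕ)) y),
      fun i => g ((T ^ (t p + i)) y))
  set S : Finset ((Fin p → X) × (Fin K → X) × (Fin K → X)) :=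
    Fintype.piFinset (fun j : Fin p => D.codes ((T ^ t j) x)) ×ˢ
      Fintype.piFinset (fun _ => G) ×ˢ Fintype.piFinset (fun _ => G)
  have hmaps : MapsTo code Y S := fun y hy => by
    simp only [code, S, Finset.mem_coe, Finset.mem_product, Fintype.mem_piFinset]
    exact ⟨fun j => (D.shadow_spec _ _ (hwindow y hy j)).1, fun _ => (hg _).1, fun _ => (hg _).1⟩
  have hnet : ∀ a b, g a = g b → dist a b ≤ ε := fun a b hab => by
    linarith [dist_triangle_right a b (g a), (hg a).2, hab ▸ (hg b).2]
  have hfib : ∀ y ∈ Y, ∀ y' ∈ Y, code y = code y' → dN T n y y' ≤ ε := by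
    intro y hy y' hy' hcode
    simp only [code, Prod.mk.injEq, funext_iff] at hcode
    obtain ⟨hblock, hhead, htail⟩ := hcode
    exact dN_le_of_forall_block hp_end (by linarith [dist_nonneg.trans (hg x).2])
      (fun i hi => hnet _ _ (hhead ⟨i, hi⟩)) (fun i hi => hnet _ _ (htail ⟨i, hi⟩))
      fun j hj u hu => D.dist_le_of_shadow_eq (hwindow y hy ⟨j, hj⟩) (hwindow y' hy' ⟨j, hj⟩)
        (hblock ⟨j, hj⟩) hu
  obtain ⟨F, hF, hcard⟩ := exists_isSpanning_card_le_of_code code S hmaps hfib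
  have hS : (S.card : ℝ) =
      (∏ j : Fin p, ((D.codes ((T ^ t j) x)).card : ℝ)) * (G.card : ℝ) ^ (2 * K) := by
    simp only [S, Finset.card_product, Fintype.card_piFinset, Finset.prod_const,
      Finset.card_univ, Fintype.card_fin]
    push_cast; ring
  calc (spanNum (dN T n) Y ε : ℝ) ≤ S.card := by exact_mod_cast (spanNum_le_card hF).trans hcard
    _ = (∏ j : Fin p, ((D.codes ((T ^ t j) x)).card : ℝ)) * (G.card : ℝ) ^ (2 * K) := hS
    _ ≤ (∏ j : Fin p, Real.exp (c * ℓ (t j))) * (G.card : ℝ) ^ (2 * K) := by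
        gcongr with j; exact D.card_codes_le _
    _ = Real.exp (c * ∑ j ∈ Finset.range p, (ℓ (t j) : ℝ)) * (G.card : ℝ) ^ (2 * K) := by
        rw [Fin.prod_univ_eq_prod_range (fun j => Real.exp (c * ℓ (t j))), ← Real.exp_sum,
          Finset.mul_sum]
    _ ≤ Real.exp (c * (n + D.maxLength)) * (G.card : ℝ) ^ (2 * K) := by
        gcongr; exact_mod_cast hp_sum

end ShadowingData

theorem stmt1_general {X : Type*} [MetricSpace X] [CompactSpace X] (T : X ≃ₜ X)
    (ε δ : ℝ) (hε : 0 < ε) (β : ℝ) (hβ : 0 < β) :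
    ∃ C : ℝ, 0 < C ∧ ∀ n : ℕ, ∀ x : X,
      (spanNum (dN T n) {y | dN T n x y ≤ δ} ε : ℝ) ≤
        C * Real.exp (((⨆ z : X, entS T (bowenBallZ T δ z) (ε / 4)) + β) * n) := by
  rcases isEmpty_or_nonempty X with hX | ⟨⟨x₀⟩⟩
  · exact ⟨1, one_pos, fun _ x => isEmptyElim x⟩
  set a := ⨆ z : X, entS T (bowenBallZ T δ z) (ε / 4)
  obtain ⟨b, hb⟩ := exists_forall_log_spanNum_dN_div_le T (by positivity : 0 < ε / 4)
  have ha : 0 ≤ a := Real.iSup_nonneg fun z => entS_nonneg (hb _)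
  have hlt : ∀ z, entS T (bowenBallZ T δ z) (ε / 4) < a + β / 2 := fun z =>
    (le_ciSup ⟨b, forall_mem_range.2 fun z => entS_le (hb _)⟩ z).trans_lt (by linarith)
  obtain ⟨D⟩ := exists_shadowingData T (r' := ε / 2) (by positivity) (by linarith) hlt
  obtain ⟨G, g, hg⟩ := exists_finset_forall_dist_le X (by positivity : 0 < ε / 2)
  have hG : 0 < (G.card : ℝ) := by exact_mod_cast Finset.card_pos.2 ⟨g x₀, (hg x₀).1⟩
  set c := a + β / 2 with hc
  refine ⟨Real.exp (c * D.maxLength) * (G.card : ℝ) ^ (2 * D.window), by positivity, fun n x => ?_⟩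
  calc (spanNum (dN T n) {y | dN T n x y ≤ δ} ε : ℝ)
      ≤ Real.exp (c * (n + D.maxLength)) * (G.card : ℝ) ^ (2 * D.window) :=
        D.spanNum_dN_le (by positivity) hg n x
    _ = Real.exp (c * D.maxLength) * (G.card : ℝ) ^ (2 * D.window) * Real.exp (c * n) := by
        rw [mul_add, Real.exp_add]; ring
    _ ≤ Real.exp (c * D.maxLength) * (G.card : ℝ) ^ (2 * D.window) * Real.exp ((a + β) * n) := by
        gcongr; rw [hc]; linarith

/-- Bowen-type estimate on spanning numbers of Bowen balls. -/
theorem stmt1 {X : Type*} [MetricSpace X] [CompactSpace X] (T : X ≃ₜ X)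
    (ε δ : ℝ) (hε : 0 < ε) (hδ : 0 < δ) (β : ℝ) (hβ : 0 < β) :
    ∃ C : ℝ, 0 < C ∧ ∀ n : ℕ, ∀ x : X,
      (spanNum (dN T n) {y | dN T n x y ≤ δ} ε : ℝ) ≤
        C * Real.exp (((⨆ z : X, entS T (bowenBallZ T δ z) (ε / 4)) + β) * n) :=
  stmt1_general T ε δ hε β hβ
end

section
/- Let (X,d) be a compact metric space and T: X → X a homeomorphism. Then for every ε, δ > 0, the entropy at scale ε satisfies S(X, ε) ≤ S(X, δ) + sup_{x ∈ X} S(B_δ(x, d_ℤ), ε/4). -/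
/-
Let `a` exceed every local entropy `S(B_δ(x, d_ℤ), ε/4)`. Each `B_δ(x, d_ℤ)` is `ε/4`-spanned for
some `d_M`, `M = M(x)`, by about `e^{M a}` points, hence lies in an open `ε/2`-thickening `V(x)` of
that spanning set. By compactness there are a window `K` and finitely many centres `x` (so that
`M(x) ≤ L`) such that every two-sided ball `{y : d(Tⁿp, Tⁿy) ≤ δ for |n| ≤ K}` lies in some `V(x)`.
If `d_N(y, w) ≤ δ`, then `Tᵗy` lies in the window ball of `Tᵗw` whenever `[t - K, t + K] ⊆ [0, N)`.
Cutting `[0, N)` into blocks of lengths `M(x)` read off the orbit of `w`, plus two end segments of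
length at most `K + L`, and coding `y` block by block covers the `δ`-ball of `d_N` around `w` by
about `e^{N a}` sets of `d_N`-diameter `ε`. Summing over a minimal `δ`-spanning set for `d_N` gives
`#(X, d_N, ε) ≲ #(X, d_N, δ) e^{N a}`.
-/

open Filter Set MeasureTheory

namespace TopologicalEntropy

open Topology

variable {X : Type*}

lemma continuous_toEquiv_zpow [TopologicalSpace X] (T : X ≃ₜ X) (n : ℤ) :
    Continuous ⇑(T.toEquiv ^ n) := by
  let toPerm : (X ≃ₜ X) →* Equiv.Perm X := ⟨⟨Homeomorph.toEquiv, rfl⟩, fun _ _ => rfl⟩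
  have h : T.toEquiv ^ n = (T ^ n).toEquiv := (map_zpow toPerm T n).symm
  rw [h]
  exact (T ^ n).continuous

lemma spanNum_le_card {ρ : X → X → ℝ} {K : Set X} {ε : ℝ} (S : Finset X)
    (hS : ∀ x ∈ K, ∃ y ∈ S, ρ x y ≤ ε) : spanNum ρ K ε ≤ S.card :=
  Nat.sInf_le ⟨S, rfl, hS⟩

lemma exists_finset_card_eq_spanNum {ρ : X → X → ℝ} {K : Set X} {ε : ℝ}
    (h : ∃ S : Finset X, ∀ x ∈ K, ∃ y ∈ S, ρ x y ≤ ε) :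
    ∃ S : Finset X, S.card = spanNum ρ K ε ∧ ∀ x ∈ K, ∃ y ∈ S, ρ x y ≤ ε :=
  let ⟨S, hS⟩ := h
  Nat.sInf_mem (s := {n | ∃ S : Finset X, S.card = n ∧ ∀ x ∈ K, ∃ y ∈ S, ρ x y ≤ ε})
    ⟨S.card, S, rfl, hS⟩

/-- `A` is covered by `n` pieces (the fibres of `c`) of `ρ`-diameter at most `ε`. Unlike spanning
sets, such covers multiply when orbit segments are concatenated. -/
def IsCodable (ρ : X → X → ℝ) (A : Set X) (ε : ℝ) (n : ℕ) : Prop :=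
  ∃ c : A → Fin n, ∀ x y : A, c x = c y → ρ x y ≤ ε

namespace IsCodable

variable {ρ : X → X → ℝ} {A B : Set X} {ε : ℝ} {n : ℕ}

lemma mono_set (h : IsCodable ρ A ε n) (hBA : B ⊆ A) : IsCodable ρ B ε n :=
  let ⟨c, hc⟩ := h
  ⟨c ∘ inclusion hBA, fun _ _ hxy => hc _ _ hxy⟩

lemma exists_spanning (h : IsCodable ρ A ε n) :
    ∃ S : Finset X, S.card ≤ n ∧ ∀ x ∈ A, ∃ y ∈ S, ρ x y ≤ ε := by
  classical
  obtain ⟨c, hc⟩ := h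
  rcases isEmpty_or_nonempty A with hA | hA
  · exact ⟨∅, by simp, fun x hx => isEmptyElim (⟨x, hx⟩ : A)⟩
  refine ⟨Finset.univ.image fun i => ((Function.invFun c i : A) : X),
    Finset.card_image_le.trans (by simp),
    fun x hx => ⟨_, Finset.mem_image_of_mem _ (Finset.mem_univ (c ⟨x, hx⟩)), ?_⟩⟩
  exact hc _ _ (Function.invFun_eq ⟨⟨x, hx⟩, rfl⟩).symm

lemma of_le {ρ' : X → X → ℝ} (h : IsCodable ρ A ε n) (hρ : ∀ x y, ρ' x y ≤ ρ x y) :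
    IsCodable ρ' A ε n :=
  let ⟨c, hc⟩ := h
  ⟨c, fun x y hxy => (hρ x y).trans (hc x y hxy)⟩

lemma spanNum_le (h : IsCodable ρ A ε n) : spanNum ρ A ε ≤ n :=
  let ⟨S, hcard, hS⟩ := h.exists_spanning
  (spanNum_le_card S hS).trans hcard

end IsCodable

lemma exists_ge_of_forall_exists_gt {P : ℕ → Prop} {t₀ R : ℕ} (h₀ : P t₀)
    (hstep : ∀ t, P t → t < R → ∃ t' > t, P t') : ∃ t, P t ∧ R ≤ t := by
  suffices ∀ d t, R - t = d → P t → ∃ t, P t ∧ R ≤ t from this _ t₀ rfl h₀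
  intro d
  induction d using Nat.strong_induction_on with
  | _ d ih =>
    intro t hd ht
    by_cases htR : R ≤ t
    · exact ⟨t, ht, htR⟩
    obtain ⟨t', htt', ht'⟩ := hstep t ht (not_le.1 htR)
    exact ih (R - t') (by omega) t' rfl ht'

lemma log_natCast_le_of_le_mul_exp {a b d : ℕ} {x : ℝ} (hx : 0 ≤ x)
    (h : (a : ℝ) ≤ b * d * Real.exp x) : Real.log a ≤ Real.log b + Real.log d + x := by
  rcases a.eq_zero_or_pos with rfl | ha
  · simp only [CharP.cast_eq_zero, Real.log_zero]
    have := Real.log_natCast_nonneg b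
    have := Real.log_natCast_nonneg d
    linarith
  have hbd : 0 < (b : ℝ) * d := pos_of_mul_pos_left
    ((Nat.cast_pos.2 ha).trans_le h) (Real.exp_pos x).le
  have hb : (b : ℝ) ≠ 0 := by rintro hb; simp [hb] at hbd
  have hd : (d : ℝ) ≠ 0 := by rintro hd; simp [hd] at hbd
  calc Real.log a ≤ Real.log (b * d * Real.exp x) := Real.log_le_log (by positivity) h
    _ = Real.log b + Real.log d + x := by
        rw [Real.log_mul (mul_ne_zero hb hd) (Real.exp_pos x).ne', Real.log_mul hb hd,
          Real.log_exp]

lemma log_spanNum_div_nonneg (ρ : X → X → ℝ) (K : Set X) (r : ℝ) (N : ℕ) :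
    0 ≤ Real.log (spanNum ρ K r) / N :=
  div_nonneg (Real.log_natCast_nonneg _) N.cast_nonneg

section BowenMetric

variable [MetricSpace X] (T : X ≃ₜ X)

lemma dist_le_dN {N n : ℕ} (hn : n < N) (x y : X) :
    dist ((T.toEquiv ^ (n : ℤ)) x) ((T.toEquiv ^ (n : ℤ)) y) ≤ dN T N x y := by
  have hfin : {n : ℤ | 0 ≤ n ∧ n < (N : ℤ)}.Finite := Set.finite_Ico 0 (N : ℤ)
  have := hfin.to_subtype
  exact le_ciSup (f := fun n : {n : ℤ | 0 ≤ n ∧ n < (N : ℤ)} =>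
    dist ((T.toEquiv ^ (n : ℤ)) x) ((T.toEquiv ^ (n : ℤ)) y))
    (Set.finite_range _).bddAbove ⟨n, by simp, by exact_mod_cast hn⟩

lemma dN_le_iff {N : ℕ} {x y : X} {r : ℝ} (hr : 0 ≤ r) :
    dN T N x y ≤ r ↔
      ∀ n : ℕ, n < N → dist ((T.toEquiv ^ (n : ℤ)) x) ((T.toEquiv ^ (n : ℤ)) y) ≤ r := by
  refine ⟨fun h n hn => (dist_le_dN T hn x y).trans h, fun h => Real.iSup_le ?_ hr⟩
  rintro ⟨n, hn0, hnN⟩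
  lift n to ℕ using hn0
  exact h n (by exact_mod_cast hnN)

lemma dN_nonneg (N : ℕ) (x y : X) : 0 ≤ dN T N x y :=
  Real.iSup_nonneg fun _ => dist_nonneg

lemma dN_mono {N N' : ℕ} (h : N ≤ N') (x y : X) : dN T N x y ≤ dN T N' x y :=
  (dN_le_iff T (dN_nonneg T N' x y)).2 fun _ hn => dist_le_dN T (hn.trans_le h) x y

lemma dN_comm (N : ℕ) (x y : X) : dN T N x y = dN T N y x := by
  simp only [dN, dOmZ, dist_comm]

lemma dN_triangle (N : ℕ) (x y z : X) : dN T N x z ≤ dN T N x y + dN T N y z :=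
  (dN_le_iff T (add_nonneg (dN_nonneg T N x y) (dN_nonneg T N y z))).2 fun _ hn =>
    (dist_triangle _ _ _).trans (add_le_add (dist_le_dN T hn x y) (dist_le_dN T hn y z))

lemma dN_add_le_iff {s t : ℕ} {x y : X} {r : ℝ} (hr : 0 ≤ r) :
    dN T (s + t) x y ≤ r ↔
      dN T s x y ≤ r ∧ dN T t ((T.toEquiv ^ (s : ℤ)) x) ((T.toEquiv ^ (s : ℤ)) y) ≤ r := by
  simp only [dN_le_iff T hr, ← Equiv.Perm.mul_apply, ← zpow_add, ← Nat.cast_add]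
  refine ⟨fun h => ⟨fun n hn => h n (by omega), fun n hn => h (n + s) (by omega)⟩,
    fun ⟨h₁, h₂⟩ n hn => ?_⟩
  rcases lt_or_ge n s with hns | hsn
  · exact h₁ n hns
  · obtain ⟨m, rfl⟩ := Nat.exists_eq_add_of_le' hsn
    exact h₂ m (by omega)

lemma mem_bowenBallZ_of_forall {δ : ℝ} (hδ : 0 ≤ δ) {x y : X}
    (h : ∀ n : ℤ, dist ((T.toEquiv ^ n) x) ((T.toEquiv ^ n) y) ≤ δ) : y ∈ bowenBallZ T δ x :=
  Real.iSup_le (fun n => h n) hδ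

variable {A B : Set X} {ε : ℝ}

lemma isCodable_dN_of_spanning {N : ℕ} (S : Finset X)
    (hS : ∀ x ∈ A, ∃ y ∈ S, dN T N x y ≤ ε / 2) : IsCodable (dN T N) A ε S.card := by
  classical
  choose center hcenter hdist using hS
  refine ⟨fun x => S.equivFin ⟨center x x.2, hcenter x x.2⟩, fun x y hxy => ?_⟩
  simp only [EmbeddingLike.apply_eq_iff_eq, Subtype.mk.injEq] at hxy
  calc dN T N x y ≤ dN T N x (center x x.2) + dN T N (center y y.2) y := by
        rw [hxy]; exact dN_triangle T N _ _ _
    _ ≤ ε / 2 + ε / 2 := by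
        rw [dN_comm T N _ y]; exact add_le_add (hdist x x.2) (hdist y y.2)
    _ = ε := add_halves ε

lemma IsCodable.dN_add {s t n m : ℕ} (hε : 0 ≤ ε) (hA : IsCodable (dN T s) A ε n)
    (hB : IsCodable (dN T t) B ε m) (hAB : MapsTo (T.toEquiv ^ (s : ℤ)) A B) :
    IsCodable (dN T (s + t)) A ε (n * m) := by
  obtain ⟨c, hc⟩ := hA
  obtain ⟨c', hc'⟩ := hB
  refine ⟨fun x => finProdFinEquiv (c x, c' (hAB.restrict _ _ _ x)),
    fun x y hxy => (dN_add_le_iff T hε).2 ?_⟩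
  simp only [EmbeddingLike.apply_eq_iff_eq, Prod.mk.injEq] at hxy
  exact ⟨hc x y hxy.1, hc' _ _ hxy.2⟩

lemma exists_isCodable_dN_pow [CompactSpace X] {r : ℝ} (hr : 0 < r) :
    ∃ g : ℕ, ∀ N : ℕ, IsCodable (dN T N) univ r (g ^ N) := by
  obtain ⟨S, hS⟩ := isCompact_univ.elim_finite_subcover (fun y : X => Metric.ball y (r / 2))
    (fun _ => Metric.isOpen_ball) fun x _ => mem_iUnion.2 ⟨x, Metric.mem_ball_self (half_pos hr)⟩
  have hone : IsCodable (dN T 1) univ r S.card := by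
    refine isCodable_dN_of_spanning T S fun x _ => ?_
    obtain ⟨y, hy, hxy⟩ := mem_iUnion₂.1 (hS (mem_univ x))
    refine ⟨y, hy, (dN_le_iff T (half_pos hr).le).2 fun n hn => ?_⟩
    obtain rfl : n = 0 := by omega
    simpa using (Metric.mem_ball.1 hxy).le
  refine ⟨S.card, fun N => ?_⟩
  induction N with
  | zero => exact ⟨fun _ => 0, fun _ _ _ => (dN_le_iff T hr.le).2 fun _ hn => absurd hn (by omega)⟩
  | succ N ih => exact pow_succ S.card N ▸ ih.dN_add T hr.le hone (mapsTo_univ _ _)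

lemma exists_spanning_dN [CompactSpace X] {r : ℝ} (hr : 0 < r) (N : ℕ) :
    ∃ S : Finset X, ∀ x : X, ∃ y ∈ S, dN T N x y ≤ r :=
  let ⟨_, hg⟩ := exists_isCodable_dN_pow T hr
  let ⟨S, _, hS⟩ := (hg N).exists_spanning
  ⟨S, fun x => hS x (mem_univ x)⟩

end BowenMetric

section Entropy

variable [MetricSpace X] (T : X ≃ₜ X)

lemma isCoboundedUnder_log_spanNum_div (K : Set X) (r : ℝ) :
    IsCoboundedUnder (· ≤ ·) atTop fun N : ℕ => Real.log (spanNum (dN T N) K r) / N :=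
  isCoboundedUnder_le_of_le atTop fun N => log_spanNum_div_nonneg _ K r N

variable [CompactSpace X]

lemma exists_log_spanNum_div_le {r : ℝ} (hr : 0 < r) :
    ∃ C : ℝ, ∀ (K : Set X) (N : ℕ), Real.log (spanNum (dN T N) K r) / N ≤ C := by
  obtain ⟨g, hg⟩ := exists_isCodable_dN_pow T hr
  refine ⟨Real.log g, fun K N => div_le_of_le_mul₀ N.cast_nonneg (Real.log_natCast_nonneg g) ?_⟩
  have hspan : spanNum (dN T N) K r ≤ g ^ N := ((hg N).mono_set (subset_univ K)).spanNum_le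
  rcases (spanNum (dN T N) K r).eq_zero_or_pos with h0 | hpos
  · rw [h0, Nat.cast_zero, Real.log_zero]
    exact mul_nonneg (Real.log_natCast_nonneg g) N.cast_nonneg
  calc Real.log (spanNum (dN T N) K r) ≤ Real.log ((g ^ N : ℕ) : ℝ) :=
        Real.log_le_log (by exact_mod_cast hpos) (by exact_mod_cast hspan)
    _ = Real.log g * N := by rw [Nat.cast_pow, Real.log_pow, mul_comm]

lemma isBoundedUnder_log_spanNum_div {r : ℝ} (hr : 0 < r) (K : Set X) :
    IsBoundedUnder (· ≤ ·) atTop fun N : ℕ => Real.log (spanNum (dN T N) K r) / N :=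
  let ⟨C, hC⟩ := exists_log_spanNum_div_le T hr
  isBoundedUnder_of ⟨C, hC K⟩

lemma entS_nonneg {r : ℝ} (hr : 0 < r) (K : Set X) : 0 ≤ entS T K r :=
  le_limsup_of_frequently_le (Frequently.of_forall fun N => log_spanNum_div_nonneg _ K r N)
    (isBoundedUnder_log_spanNum_div T hr K)

lemma bddAbove_range_entS {r : ℝ} (hr : 0 < r) (K : X → Set X) :
    BddAbove (range fun x => entS T (K x) r) := by
  obtain ⟨C, hC⟩ := exists_log_spanNum_div_le T hr
  refine ⟨C, forall_mem_range.2 fun x => limsup_le_of_le ?_ (Eventually.of_forall (hC (K x)))⟩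
  exact isCoboundedUnder_log_spanNum_div T (K x) r

lemma exists_spanning_of_entS_lt {r c : ℝ} (hr : 0 < r) {K : Set X} (h : entS T K r < c) :
    ∃ M : ℕ, 1 ≤ M ∧ ∃ E : Finset X, (E.card : ℝ) ≤ Real.exp (M * c) ∧
      ∀ y ∈ K, ∃ z ∈ E, dN T M y z ≤ r := by
  obtain ⟨M, hlt, hM⟩ := ((eventually_lt_of_limsup_lt h
    (isBoundedUnder_log_spanNum_div T hr K)).and (eventually_ge_atTop 1)).exists
  obtain ⟨S, hS⟩ := exists_spanning_dN T hr M
  obtain ⟨E, hcard, hE⟩ := exists_finset_card_eq_spanNum ⟨S, fun y _ => hS y⟩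
  refine ⟨M, hM, E, ?_, hE⟩
  rw [hcard]
  rcases (spanNum (dN T M) K r).eq_zero_or_pos with h0 | hpos
  · rw [h0, Nat.cast_zero]
    exact (Real.exp_pos _).le
  rw [← Real.log_le_iff_le_exp (by exact_mod_cast hpos), ← div_le_iff₀' (by exact_mod_cast hM)]
  exact hlt.le

lemma entS_le_add_of_spanNum_le {ε δ c : ℝ} (hδ : 0 < δ) (hc : 0 ≤ c) {C : ℕ}
    (h : ∀ N : ℕ,
      (spanNum (dN T N) univ ε : ℝ) ≤ C * spanNum (dN T N) univ δ * Real.exp (N * c)) :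
    entS T univ ε ≤ entS T univ δ + c := by
  set u := fun N : ℕ => Real.log (spanNum (dN T N) univ δ) / N
  have hC : Tendsto (fun N : ℕ => Real.log C / N) atTop (𝓝 0) :=
    tendsto_const_div_atTop_nhds_zero_nat _
  have hu := isBoundedUnder_log_spanNum_div T hδ univ
  have huc : IsBoundedUnder (· ≤ ·) atTop fun N => u N + c :=
    isBoundedUnder_le_add hu isBoundedUnder_const
  have hle : ∀ N : ℕ, Real.log (spanNum (dN T N) univ ε) / N ≤ Real.log C / N + (u N + c) := by
    intro N
    rcases N.eq_zero_or_pos with rfl | hN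
    · simpa [u] using hc
    calc Real.log (spanNum (dN T N) univ ε) / N
        ≤ (Real.log C + Real.log (spanNum (dN T N) univ δ) + N * c) / N :=
          div_le_div_of_nonneg_right
            (log_natCast_le_of_le_mul_exp (mul_nonneg N.cast_nonneg hc) (h N)) N.cast_nonneg
      _ = Real.log C / N + (u N + c) := by
          simp only [u]
          field_simp
          ring
  calc entS T univ ε ≤ limsup ((fun N : ℕ => Real.log C / N) + fun N => u N + c) atTop :=
        limsup_le_limsup (Eventually.of_forall hle) (isCoboundedUnder_log_spanNum_div T _ _)
          (isBoundedUnder_le_add hC.isBoundedUnder_le huc)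
    _ ≤ limsup (fun N : ℕ => Real.log C / N) atTop + limsup (fun N => u N + c) atTop :=
        limsup_add_le hC.isBoundedUnder_ge hC.isBoundedUnder_le
          (isCoboundedUnder_le_of_le atTop fun N => add_nonneg (log_spanNum_div_nonneg _ _ _ N) hc)
          huc
    _ = entS T univ δ + c := by
        rw [hC.limsup_eq, zero_add,
          limsup_add_const _ _ _ hu (isCoboundedUnder_log_spanNum_div T _ _)]
        rfl

end Entropy

section WindowBall

variable [MetricSpace X] (T : X ≃ₜ X)

def windowBall (k : ℕ) (r : ℝ) (x : X) : Set X :=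
  {y | ∀ n : ℤ, |n| ≤ k → dist ((T.toEquiv ^ n) x) ((T.toEquiv ^ n) y) ≤ r}

lemma isClosed_windowBall (k : ℕ) (r : ℝ) (x : X) : IsClosed (windowBall T k r x) := by
  simp only [windowBall, ofPred_forall]
  exact isClosed_iInter fun n => isClosed_iInter fun _ =>
    isClosed_le (continuous_const.dist (continuous_toEquiv_zpow T n)) continuous_const

lemma windowBall_subset_windowBall {k k' : ℕ} {r r' : ℝ} (hk : k ≤ k') (hr : r' ≤ r) (x : X) :
    windowBall T k' r' x ⊆ windowBall T k r x := fun _ hy n hn =>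
  (hy n (hn.trans (by exact_mod_cast hk))).trans hr

lemma iInter_windowBall_subset_bowenBallZ {δ : ℝ} (hδ : 0 ≤ δ) (x : X) :
    ⋂ k : ℕ, windowBall T k (δ + 1 / (k + 1)) x ⊆ bowenBallZ T δ x := by
  intro y hy
  refine mem_bowenBallZ_of_forall T hδ fun n => ?_
  have hlim : Tendsto (fun k : ℕ => δ + 1 / ((k : ℝ) + 1)) atTop (𝓝 δ) := by
    simpa using tendsto_one_div_add_atTop_nhds_zero_nat.const_add δ
  refine ge_of_tendsto hlim ((eventually_ge_atTop n.natAbs).mono fun k hk => ?_)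
  exact mem_iInter.1 hy k n (by rw [Int.abs_eq_natAbs]; exact_mod_cast hk)

lemma exists_windowBall_subset [CompactSpace X] {δ : ℝ} (hδ : 0 ≤ δ) {x : X} {V : Set X}
    (hV : IsOpen V) (hBV : bowenBallZ T δ x ⊆ V) :
    ∃ k : ℕ, windowBall T k (δ + 1 / (k + 1)) x ⊆ V := by
  by_contra! h
  have hclosed k : IsClosed (windowBall T k (δ + 1 / (k + 1)) x \ V) :=
    (isClosed_windowBall T _ _ x).sdiff hV
  obtain ⟨y, hy⟩ := IsCompact.nonempty_iInter_of_sequence_nonempty_isCompact_isClosed _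
    (fun k => sdiff_subset_sdiff_left <| windowBall_subset_windowBall T k.le_succ
      (by gcongr; simp) x)
    (fun k => sdiff_nonempty.2 (h k)) (hclosed 0).isCompact hclosed
  rw [mem_iInter] at hy
  exact (hy 0).2
    (hBV (iInter_windowBall_subset_bowenBallZ T hδ x (mem_iInter.2 fun k => (hy k).1)))

lemma exists_finset_windowBall_subset [CompactSpace X] {δ : ℝ} (hδ : 0 ≤ δ) (V : X → Set X)
    (hV : ∀ x, IsOpen (V x)) (hBV : ∀ x, bowenBallZ T δ x ⊆ V x) :
    ∃ (K : ℕ) (s : Finset X), ∀ p : X, ∃ x ∈ s, windowBall T K δ p ⊆ V x := by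
  choose k hk using fun x => exists_windowBall_subset T hδ (hV x) (hBV x)
  let U x := ⋂ n ∈ Finset.Icc (-(k x : ℤ)) (k x),
    {p | dist ((T.toEquiv ^ n) x) ((T.toEquiv ^ n) p) < 1 / (k x + 1)}
  obtain ⟨s, hs⟩ := isCompact_univ.elim_finite_subcover U
    (fun x => isOpen_biInter_finset fun n _ =>
      isOpen_lt (continuous_const.dist (continuous_toEquiv_zpow T n)) continuous_const)
    fun p _ => mem_iUnion.2 ⟨p, mem_iInter₂.2 fun n _ => by
      simp only [mem_ofPred_eq, dist_self]; positivity⟩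
  refine ⟨s.sup k, s, fun p => ?_⟩
  obtain ⟨x, hx, hpx⟩ := mem_iUnion₂.1 (hs (mem_univ p))
  refine ⟨x, hx, fun y hy => hk x fun n hn => ?_⟩
  have hxp := mem_iInter₂.1 hpx n (Finset.mem_Icc.2 (abs_le.1 hn))
  have hpy := hy n (hn.trans (by exact_mod_cast Finset.le_sup hx))
  calc dist ((T.toEquiv ^ n) x) ((T.toEquiv ^ n) y)
      ≤ dist ((T.toEquiv ^ n) x) ((T.toEquiv ^ n) p)
          + dist ((T.toEquiv ^ n) p) ((T.toEquiv ^ n) y) := dist_triangle _ _ _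
    _ ≤ δ + 1 / (k x + 1) := by rw [add_comm]; exact add_le_add hpy (le_of_lt hxp)

lemma mapsTo_zpow_windowBall {N K t : ℕ} (hKt : K ≤ t) (htN : t + K < N) {δ : ℝ} (w : X) :
    MapsTo (T.toEquiv ^ (t : ℤ)) {y | dN T N y w ≤ δ}
      (windowBall T K δ ((T.toEquiv ^ (t : ℤ)) w)) := by
  intro y hy n hn
  obtain ⟨hn₁, hn₂⟩ := abs_le.1 hn
  rw [← Equiv.Perm.mul_apply, ← Equiv.Perm.mul_apply, ← zpow_add, dist_comm]
  have hnt : ((n + t).toNat : ℤ) = n + t := Int.toNat_of_nonneg (by omega)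
  rw [← hnt]
  exact (dist_le_dN T (by omega) y w).trans hy

end WindowBall

section Counting

variable [MetricSpace X] (T : X ≃ₜ X) {ε δ c : ℝ} {K L g : ℕ} (M : X → ℕ)

/-- The local codes are concatenated along the orbit of `w` at the times `K = t₀ < t₁ < ⋯`,
`tⱼ₊₁ = tⱼ + M (T^tⱼ w)`, framed by codes of length `K + L` at both ends. -/
lemma exists_isCodable_dN_closedBall (hε : 0 ≤ ε) (hc : 0 ≤ c) (hM : ∀ p, 1 ≤ M p ∧ M p ≤ L)
    (hcode : ∀ p, ∃ n : ℕ, (n : ℝ) ≤ Real.exp (M p * c) ∧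
      IsCodable (dN T (M p)) (windowBall T K δ p) ε n)
    (hG : IsCodable (dN T (K + L)) univ ε g) (N : ℕ) (w : X) :
    ∃ n : ℕ, (n : ℝ) ≤ g ^ 2 * Real.exp (N * c) ∧
      IsCodable (dN T N) {y | dN T N y w ≤ δ} ε n := by
  set A := {y | dN T N y w ≤ δ}
  let P t := K ≤ t ∧ t ≤ N + K ∧
    ∃ n : ℕ, (n : ℝ) ≤ g * Real.exp ((t - K : ℝ) * c) ∧ IsCodable (dN T t) A ε n
  have h₀ : P K := ⟨le_rfl, by omega, g, by simp,
    (hG.mono_set (subset_univ A)).of_le (dN_mono T (by omega))⟩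
  have hstep : ∀ t, P t → t < N - (K + L) → ∃ t' > t, P t' := by
    rintro t ⟨hKt, -, n, hn, hA⟩ htR
    obtain ⟨m, hm, hB⟩ := hcode ((T.toEquiv ^ (t : ℤ)) w)
    obtain ⟨hM₁, hM₂⟩ := hM ((T.toEquiv ^ (t : ℤ)) w)
    refine ⟨_, by omega, by omega, by omega, n * m, ?_,
      hA.dN_add T hε hB (mapsTo_zpow_windowBall T hKt (by omega) w)⟩
    calc ((n * m : ℕ) : ℝ) ≤ g * Real.exp ((t - K : ℝ) * c) * Real.exp (M _ * c) := by
          push_cast; gcongr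
      _ = _ := by rw [mul_assoc, ← Real.exp_add]; push_cast; ring_nf
  obtain ⟨t, ⟨-, htN, n, hn, hA⟩, hRt⟩ := exists_ge_of_forall_exists_gt h₀ hstep
  refine ⟨n * g, ?_, (hA.dN_add T hε hG (mapsTo_univ _ _)).of_le (dN_mono T (by omega))⟩
  have htK : (t - K : ℝ) ≤ N := by
    rw [sub_le_iff_le_add]; exact_mod_cast htN
  calc ((n * g : ℕ) : ℝ) ≤ g * Real.exp ((t - K : ℝ) * c) * g := by push_cast; gcongr
    _ ≤ g * Real.exp (N * c) * g := by gcongr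
    _ = g ^ 2 * Real.exp (N * c) := by ring

lemma spanNum_le_mul_of_windowBall_codes [CompactSpace X] (hε : 0 ≤ ε) (hδ : 0 < δ)
    (hc : 0 ≤ c) (hM : ∀ p, 1 ≤ M p ∧ M p ≤ L)
    (hcode : ∀ p, ∃ n : ℕ, (n : ℝ) ≤ Real.exp (M p * c) ∧
      IsCodable (dN T (M p)) (windowBall T K δ p) ε n)
    (hG : IsCodable (dN T (K + L)) univ ε g) (N : ℕ) :
    (spanNum (dN T N) univ ε : ℝ) ≤ g ^ 2 * spanNum (dN T N) univ δ * Real.exp (N * c) := by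
  classical
  obtain ⟨F, hFcard, hF⟩ := exists_finset_card_eq_spanNum
    (let ⟨F, hF⟩ := exists_spanning_dN T hδ N; ⟨F, fun x _ => hF x⟩)
  choose n hn hcodes using exists_isCodable_dN_closedBall T M hε hc hM hcode hG N
  choose S hScard hS using fun w => (hcodes w).exists_spanning
  have hspan : ∀ x ∈ univ, ∃ y ∈ F.biUnion S, dN T N x y ≤ ε := fun x hx => by
    obtain ⟨w, hw, hxw⟩ := hF x hx
    obtain ⟨y, hy, hxy⟩ := hS w x hxw
    exact ⟨y, Finset.mem_biUnion.2 ⟨w, hw, hy⟩, hxy⟩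
  calc (spanNum (dN T N) univ ε : ℝ) ≤ ∑ w ∈ F, ((S w).card : ℝ) := by
        exact_mod_cast (spanNum_le_card _ hspan).trans Finset.card_biUnion_le
    _ ≤ ∑ w ∈ F, (g ^ 2 * Real.exp (N * c)) :=
        Finset.sum_le_sum fun w _ => (Nat.cast_le.2 (hScard w)).trans (hn w)
    _ = _ := by rw [Finset.sum_const, nsmul_eq_mul, hFcard]; ring

lemma entS_le_add_of_forall_entS_bowenBallZ_lt [CompactSpace X] (hε : 0 < ε) (hδ : 0 < δ)
    (hc : 0 ≤ c) (h : ∀ x, entS T (bowenBallZ T δ x) (ε / 4) < c) :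
    entS T univ ε ≤ entS T univ δ + c := by
  choose M hM E hE hEspan using fun x => exists_spanning_of_entS_lt T (by positivity) (h x)
  -- Open thickenings of the local spanning data: radius `ε / 2 > ε / 4` leaves room for openness.
  let V x := ⋃ z ∈ E x, ⋂ m ∈ Finset.range (M x),
    {y | dist ((T.toEquiv ^ (m : ℤ)) y) ((T.toEquiv ^ (m : ℤ)) z) < ε / 2}
  have hV x : IsOpen (V x) := isOpen_biUnion fun z _ => isOpen_biInter_finset fun m _ =>
    isOpen_lt ((continuous_toEquiv_zpow T m).dist continuous_const) continuous_const
  have hBV x : bowenBallZ T δ x ⊆ V x := fun y hy => by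
    obtain ⟨z, hz, hyz⟩ := hEspan x y hy
    exact mem_biUnion hz (mem_iInter₂.2 fun m hm =>
      (dist_le_dN T (Finset.mem_range.1 hm) y z).trans_lt (by linarith))
  obtain ⟨K, s, hs⟩ := exists_finset_windowBall_subset T hδ.le V hV hBV
  choose sel hsel hsub using hs
  obtain ⟨g, hg⟩ := exists_isCodable_dN_pow T hε
  have hcode : ∀ p, ∃ n : ℕ, (n : ℝ) ≤ Real.exp ((M ∘ sel) p * c) ∧
      IsCodable (dN T ((M ∘ sel) p)) (windowBall T K δ p) ε n := fun p => by
    refine ⟨(E (sel p)).card, hE _, isCodable_dN_of_spanning T _ fun y hy => ?_⟩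
    obtain ⟨z, hz, hyz⟩ := mem_iUnion₂.1 (hsub p hy)
    exact ⟨z, hz, (dN_le_iff T (by positivity)).2 fun m hm =>
      (mem_iInter₂.1 hyz m (Finset.mem_range.2 hm)).le⟩
  have hML : ∀ p, 1 ≤ (M ∘ sel) p ∧ (M ∘ sel) p ≤ s.sup M :=
    fun p => ⟨hM _, Finset.le_sup (hsel p)⟩
  exact entS_le_add_of_spanNum_le T hδ hc fun N => by
    exact_mod_cast spanNum_le_mul_of_windowBall_codes T (M ∘ sel) hε.le hδ hc hML hcode
      (hg (K + s.sup M)) N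

end Counting

end TopologicalEntropy

open TopologicalEntropy in
theorem stmt2 {X : Type*} [MetricSpace X] [CompactSpace X] (T : X ≃ₜ X)
    (ε δ : ℝ) (hε : 0 < ε) (hδ : 0 < δ) :
    entS T univ ε ≤ entS T univ δ + ⨆ x : X, entS T (bowenBallZ T δ x) (ε / 4) := by
  have hbdd := bddAbove_range_entS T (by positivity : 0 < ε / 4) (bowenBallZ T δ)
  have ha : 0 ≤ ⨆ x : X, entS T (bowenBallZ T δ x) (ε / 4) :=
    Real.iSup_nonneg fun x => entS_nonneg T (by positivity) _
  refine le_of_forall_pos_le_add fun η hη => ?_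
  rw [add_assoc]
  exact entS_le_add_of_forall_entS_bowenBallZ_lt T hε hδ (by positivity)
    fun x => (le_ciSup hbdd x).trans_lt (lt_add_of_pos_right _ hη)
end

section
/- For every η > 0 there exists a natural number K = K(η) with the following property. Let Ω ⊆ ℝ^D be a bounded Borel set and 𝒞₁, ..., 𝒞_K finite families of cubes in ℝ^D such that: (1) ℓ_max(𝒞₁) ≥ 1 and ℓ_min(𝒞_{k+1}) ≥ K · ℓ_max(𝒞_k) for all 1 ≤ k ≤ K−1; (2) vol(∂(Ω, ℓ_max(𝒞_K))) < (η/3)·vol(Ω); (3) Ω ⊆ ⋃_{Λ ∈ 𝒞_k} Λ for each k. Then there exists a pairwise disjoint subfamily 𝒜 ⊆ 𝒞₁ ∪ ... ∪ 𝒞_K with ⋃_{Λ ∈ 𝒜} Λ ⊆ Ω and vol(B₁(Ω \ ⋃_{Λ ∈ 𝒜} Λ)) < η · vol(Ω). -/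
/-!
Process the levels from coarsest to finest, leaving out the first one. When level `k` is
processed, the cubes chosen so far have side at least `K ℓ_max(𝒞_k)` and leave the region `Ω'`.
A Vitali selection among the cubes of `𝒞_k` inside `Ω'` gives a disjoint family `A` whose
fivefold enlargements cover every point of `B₁(Ω')` whose `ℓ_max(𝒞_k)`-cube lies in `Ω'`; every
other point of `B₁(Ω')` is close to `∂Ω` or lies in a thin shell around an earlier cube, and the
shells have total volume `o(1) · vol Ω` as `K → ∞`. The cubes of `A` shrunk by `1` fill a fixed
fraction `10^{-D}` of the enlargements and avoid `B₁(Ω' \ ⋃ A)`, so each level multiplies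
`vol B₁(Ω \ ⋃ chosen)` by `1 - 10^{-D}` up to that error; `K - 1` levels make the main term small.
-/

open Set MeasureTheory

/-- The axis-parallel cube `u + [0,L]^D` in `ℝ^D` (with the `ℓ^∞` norm). -/
def cubeG {D : ℕ} (u : Fin D → ℝ) (L : ℝ) : Set (Fin D → ℝ) :=
  {x | ∀ i, x i ∈ Set.Icc (u i) (u i + L)}

/-- The concentric tripled cube `3Λ = u + [-L, 2L]^D`. -/
def cube3 {D : ℕ} (u : Fin D → ℝ) (L : ℝ) : Set (Fin D → ℝ) :=
  {x | ∀ i, x i ∈ Set.Icc (u i - L) (u i + 2 * L)}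

/-- The `r`-boundary `∂(Ω, r)` of `Ω ⊆ ℝ^D` (ℓ^∞ norm). -/
def bdryG {D : ℕ} (Ω : Set (Fin D → ℝ)) (r : ℝ) : Set (Fin D → ℝ) :=
  {x | ∃ y ∈ Ω, ∃ z ∉ Ω, ‖x - y‖ ≤ r ∧ ‖x - z‖ ≤ r}

/-- The closed `r`-neighborhood `B_r(Ω)` (ℓ^∞ norm). -/
def nbhdG {D : ℕ} (r : ℝ) (Ω : Set (Fin D → ℝ)) : Set (Fin D → ℝ) :=
  {x | ∃ y ∈ Ω, ‖x - y‖ ≤ r}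

/-- The `r`-interior `int(Ω, r) = {x ∈ Ω : x + [-r,r]^D ⊆ Ω}`. -/
def intG {D : ℕ} (Ω : Set (Fin D → ℝ)) (r : ℝ) : Set (Fin D → ℝ) :=
  {x | x ∈ Ω ∧ ∀ v : Fin D → ℝ, ‖v‖ ≤ r → x + v ∈ Ω}

/-- Maximal side length in a finite family of cubes (cubes encoded as pairs `(u, L)`). -/
noncomputable def lmax {D : ℕ} (C : Finset ((Fin D → ℝ) × ℝ)) : ℝ :=
  sSup (Prod.snd '' (C : Set ((Fin D → ℝ) × ℝ)))

/-- Minimal side length in a finite family of cubes. -/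
noncomputable def lmin {D : ℕ} (C : Finset ((Fin D → ℝ) × ℝ)) : ℝ :=
  sInf (Prod.snd '' (C : Set ((Fin D → ℝ) × ℝ)))

namespace OrnsteinWeiss

open Bornology Filter Topology
open scoped ENNReal

variable {D : ℕ}

def cube (c : (Fin D → ℝ) × ℝ) : Set (Fin D → ℝ) := cubeG c.1 c.2

/-- For negative `r` this shrinks the cube. -/
def thicken (r : ℝ) (c : (Fin D → ℝ) × ℝ) : Set (Fin D → ℝ) :=
  {x | ∀ i, x i ∈ Icc (c.1 i - r) (c.1 i + c.2 + r)}

lemma thicken_zero (c : (Fin D → ℝ) × ℝ) : thicken 0 c = cube c := by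
  ext x; simp [thicken, cube, cubeG]

lemma thicken_mono {r s : ℝ} (h : r ≤ s) (c : (Fin D → ℝ) × ℝ) : thicken r c ⊆ thicken s c :=
  fun x hx i => ⟨by linarith [(hx i).1], by linarith [(hx i).2]⟩

lemma thicken_subset_cube {r : ℝ} (hr : r ≤ 0) (c : (Fin D → ℝ) × ℝ) : thicken r c ⊆ cube c :=
  (thicken_mono hr c).trans (thicken_zero c).subset

lemma thicken_eq_Icc (r : ℝ) (c : (Fin D → ℝ) × ℝ) :
    thicken r c = Icc (c.1 - fun _ => r) (c.1 + fun _ => c.2 + r) := by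
  ext x
  simp only [thicken, mem_Icc, mem_ofPred_eq, Pi.le_def, Pi.sub_apply, Pi.add_apply, forall_and,
    add_assoc]

lemma measurableSet_thicken (r : ℝ) (c : (Fin D → ℝ) × ℝ) : MeasurableSet (thicken r c) := by
  rw [thicken_eq_Icc]; exact measurableSet_Icc

lemma volume_thicken (r : ℝ) (c : (Fin D → ℝ) × ℝ) :
    volume (thicken r c) = ENNReal.ofReal (c.2 + 2 * r) ^ D := by
  rw [thicken_eq_Icc, Real.volume_Icc_pi]
  simp only [Pi.add_apply, Pi.sub_apply, add_sub_sub_cancel, Finset.prod_const, Finset.card_univ,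
    Fintype.card_fin]
  ring_nf

lemma mem_thicken_of_norm_sub_le {r s : ℝ} {c : (Fin D → ℝ) × ℝ} {x y : Fin D → ℝ}
    (hx : x ∈ thicken r c) (hxy : ‖y - x‖ ≤ s) : y ∈ thicken (r + s) c := by
  intro i
  have hi := abs_le.1 ((Real.norm_eq_abs _).symm.trans_le ((norm_le_pi_norm (y - x) i).trans hxy))
  simp only [Pi.sub_apply] at hi
  exact ⟨by linarith [(hx i).1], by linarith [(hx i).2]⟩

lemma norm_sub_le_of_mem_cube {c : (Fin D → ℝ) × ℝ} (hc : 0 ≤ c.2) {x y : Fin D → ℝ}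
    (hx : x ∈ cube c) (hy : y ∈ cube c) : ‖y - x‖ ≤ c.2 := by
  refine (pi_norm_le_iff_of_nonneg hc).2 fun i => ?_
  rw [Pi.sub_apply, Real.norm_eq_abs, abs_le]
  exact ⟨by linarith [(hx i).2, (hy i).1], by linarith [(hx i).1, (hy i).2]⟩

lemma cube_subset_thicken_of_inter {c a : (Fin D → ℝ) × ℝ} {τ : ℝ} (hc : 0 ≤ c.2)
    (hca : c.2 ≤ τ * a.2) (hmeet : (cube c ∩ cube a).Nonempty) :
    cube c ⊆ thicken (τ * a.2) a := by
  obtain ⟨w, hwc, hwa⟩ := hmeet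
  intro x hx
  have hx' := mem_thicken_of_norm_sub_le (by rwa [thicken_zero]) (norm_sub_le_of_mem_cube hc hwc hx)
  exact thicken_mono (by linarith) a hx'

lemma le_lmax {C : Finset ((Fin D → ℝ) × ℝ)} {c : (Fin D → ℝ) × ℝ} (hc : c ∈ C) :
    c.2 ≤ lmax C :=
  le_csSup ((C.finite_toSet.image _).bddAbove) ⟨c, hc, rfl⟩

lemma lmin_le {C : Finset ((Fin D → ℝ) × ℝ)} {c : (Fin D → ℝ) × ℝ} (hc : c ∈ C) :
    lmin C ≤ c.2 :=
  csInf_le ((C.finite_toSet.image _).bddBelow) ⟨c, hc, rfl⟩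

lemma lmin_le_lmax (C : Finset ((Fin D → ℝ) × ℝ)) : lmin C ≤ lmax C :=
  Real.sInf_le_sSup _ (C.finite_toSet.image _).bddBelow (C.finite_toSet.image _).bddAbove

lemma lmax_nonneg {C : Finset ((Fin D → ℝ) × ℝ)} (hC : ∀ c ∈ C, 0 < c.2) : 0 ≤ lmax C :=
  Real.sSup_nonneg fun _ ⟨c, hc, hx⟩ => hx ▸ (hC c hc).le

lemma isBounded_nbhdG {r : ℝ} {Ω : Set (Fin D → ℝ)} (hΩ : IsBounded Ω) :
    IsBounded (nbhdG r Ω) :=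
  hΩ.cthickening.subset fun x ⟨y, hy, hxy⟩ =>
    Metric.mem_cthickening_of_dist_le x y r Ω hy (by rwa [dist_eq_norm])

lemma nbhdG_subset_union_bdryG {s r : ℝ} (h : s ≤ r) (Ω : Set (Fin D → ℝ)) :
    nbhdG s Ω ⊆ Ω ∪ bdryG Ω r := by
  rintro x ⟨y, hy, hxy⟩
  by_cases hx : x ∈ Ω
  · exact Or.inl hx
  · exact Or.inr ⟨y, hy, x, hx, hxy.trans h, by simpa using (norm_nonneg _).trans (hxy.trans h)⟩

/-- For `4 ≤ L`, the inner cube `thicken (-1) a` has side `L - 2 ≥ L / 2`, a tenth of the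
side `5 L` of the enlargement `thicken (2 L) a`. -/
noncomputable def densityConst (D : ℕ) : ℝ := (1 / 10) ^ D

lemma densityConst_pos : 0 < densityConst D := by unfold densityConst; positivity

lemma densityConst_le_one : densityConst D ≤ 1 := pow_le_one₀ (by norm_num) (by norm_num)

lemma densityConst_mul_volume_le {a : (Fin D → ℝ) × ℝ} (ha : 4 ≤ a.2) :
    ENNReal.ofReal (densityConst D) * volume (thicken (2 * a.2) a) ≤
      volume (thicken (-1) a) := by
  rw [volume_thicken, volume_thicken, densityConst,
    ENNReal.ofReal_pow (by norm_num), ← mul_pow, ← ENNReal.ofReal_mul (by norm_num)]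
  exact pow_le_pow_left' (ENNReal.ofReal_le_ofReal (by linarith)) D

noncomputable def shellRatio (D : ℕ) (κ : ℝ) : ℝ := (1 + 2 / κ) ^ D - (1 - 2 / κ) ^ D

lemma shellRatio_nonneg {κ : ℝ} (hκ : 2 ≤ κ) : 0 ≤ shellRatio D κ := by
  have : 2 / κ ≤ 1 := (div_le_one (by linarith)).2 hκ
  have : 0 ≤ 2 / κ := by positivity
  exact sub_nonneg.2 (pow_le_pow_left₀ (by linarith) (by linarith) D)

lemma tendsto_shellRatio : Tendsto (shellRatio D) atTop (𝓝 0) := by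
  have h : Continuous fun x : ℝ => (1 + x) ^ D - (1 - x) ^ D := by fun_prop
  have := (h.tendsto 0).comp
    (tendsto_const_nhds.div_atTop tendsto_id : Tendsto (fun κ : ℝ => 2 / κ) atTop (𝓝 0))
  rwa [add_zero, sub_zero, sub_self] at this

lemma add_pow_sub_add_pow_le {κ a b t : ℝ} (hκ : 2 ≤ κ) (ha : 0 ≤ a) (hab : -a ≤ b)
    (ht : κ * a ≤ t) : (t + 2 * a) ^ D - (t + 2 * b) ^ D ≤ shellRatio D κ * t ^ D := by
  have hκ0 : 0 < κ := by linarith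
  have hat : 2 * a ≤ 2 / κ * t := by rw [div_mul_eq_mul_div, le_div_iff₀ hκ0]; linarith
  have h1 : (t + 2 * a) ^ D ≤ ((1 + 2 / κ) * t) ^ D :=
    pow_le_pow_left₀ (by nlinarith) (by linarith) D
  have h2 : ((1 - 2 / κ) * t) ^ D ≤ (t + 2 * b) ^ D :=
    pow_le_pow_left₀ (mul_nonneg (by rw [sub_nonneg, div_le_one hκ0]; exact hκ) (by nlinarith))
      (by linarith) D
  rw [shellRatio, sub_mul, ← mul_pow, ← mul_pow]
  linarith

lemma volume_shell_le {κ l : ℝ} {Q : (Fin D → ℝ) × ℝ} (hκ : 2 ≤ κ) (hl : 1 ≤ l)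
    (hQ : κ * l ≤ Q.2) :
    volume (thicken l Q \ thicken (-1) Q) ≤ ENNReal.ofReal (shellRatio D κ) * volume (cube Q) := by
  have hvol (r : ℝ) (hr : -1 ≤ r) :
      volume (thicken r Q) = ENNReal.ofReal ((Q.2 + 2 * r) ^ D) := by
    rw [volume_thicken, ENNReal.ofReal_pow (by nlinarith)]
  calc volume (thicken l Q \ thicken (-1) Q)
      = ENNReal.ofReal ((Q.2 + 2 * l) ^ D - (Q.2 + 2 * -1) ^ D) := by
        rw [measure_sdiff (thicken_mono (by linarith) Q)
          (measurableSet_thicken _ _).nullMeasurableSet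
          (by rw [hvol _ le_rfl]; exact ENNReal.ofReal_ne_top), hvol l (by linarith),
          hvol (-1) le_rfl, ENNReal.ofReal_sub _ (pow_nonneg (by nlinarith) D)]
    _ ≤ ENNReal.ofReal (shellRatio D κ * (Q.2 + 2 * 0) ^ D) := ENNReal.ofReal_le_ofReal
        (by simpa using add_pow_sub_add_pow_le (b := -1) hκ (by linarith) (by linarith) hQ)
    _ = ENNReal.ofReal (shellRatio D κ) * volume (cube Q) := by
        rw [ENNReal.ofReal_mul (shellRatio_nonneg hκ), ← hvol 0 (by norm_num), thicken_zero]

/-- Inner cubes `thicken (-1) a` of a disjoint family inside `U` lie in `nbhdG 1 U` but stay at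
distance more than `1` from everything outside the family. -/
lemma volume_nbhdG_diff_add_le {U : Set (Fin D → ℝ)} {A : Finset ((Fin D → ℝ) × ℝ)}
    (hA : (A : Set ((Fin D → ℝ) × ℝ)).PairwiseDisjoint cube) (hAU : ∀ a ∈ A, cube a ⊆ U)
    (hside : ∀ a ∈ A, 4 ≤ a.2) :
    volume (nbhdG 1 (U \ ⋃ a ∈ A, cube a)) +
        ENNReal.ofReal (densityConst D) * volume (⋃ a ∈ A, thicken (2 * a.2) a) ≤
      volume (nbhdG 1 U) := by
  have hinner (a : (Fin D → ℝ) × ℝ) : thicken (-1) a ⊆ cube a := thicken_subset_cube (by norm_num) a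
  have hdisj : Disjoint (nbhdG 1 (U \ ⋃ a ∈ A, cube a)) (⋃ a ∈ A, thicken (-1) a) := by
    refine Set.disjoint_left.2 fun x ⟨y, hy, hxy⟩ hx => ?_
    obtain ⟨a, ha, hxa⟩ := mem_iUnion₂.1 hx
    have hya := mem_thicken_of_norm_sub_le (s := 1) hxa (by rwa [norm_sub_rev])
    rw [neg_add_cancel, thicken_zero] at hya
    exact hy.2 (mem_iUnion₂.2 ⟨a, ha, hya⟩)
  have hsub : nbhdG 1 (U \ ⋃ a ∈ A, cube a) ∪ ⋃ a ∈ A, thicken (-1) a ⊆ nbhdG 1 U :=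
    union_subset (fun x ⟨y, hy, hxy⟩ => ⟨y, hy.1, hxy⟩) (iUnion₂_subset fun a ha x hx =>
      ⟨x, hAU a ha (hinner a hx), by simp⟩)
  have hinner_vol : ENNReal.ofReal (densityConst D) * volume (⋃ a ∈ A, thicken (2 * a.2) a) ≤
      volume (⋃ a ∈ A, thicken (-1) a) :=
    calc ENNReal.ofReal (densityConst D) * volume (⋃ a ∈ A, thicken (2 * a.2) a)
        ≤ ∑ a ∈ A, ENNReal.ofReal (densityConst D) * volume (thicken (2 * a.2) a) := by
          rw [← Finset.mul_sum]; gcongr; exact measure_biUnion_finset_le _ _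
      _ ≤ ∑ a ∈ A, volume (thicken (-1) a) :=
          Finset.sum_le_sum fun a ha => densityConst_mul_volume_le (hside a ha)
      _ = volume (⋃ a ∈ A, thicken (-1) a) :=
          (measure_biUnion_finset (hA.mono hinner) fun a _ => measurableSet_thicken _ _).symm
  calc _ ≤ volume (nbhdG 1 (U \ ⋃ a ∈ A, cube a)) + volume (⋃ a ∈ A, thicken (-1) a) :=
        add_le_add_right hinner_vol _
    _ = volume (nbhdG 1 (U \ ⋃ a ∈ A, cube a) ∪ ⋃ a ∈ A, thicken (-1) a) :=
        (measure_union hdisj (Finset.measurableSet_biUnion _ fun a _ =>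
          measurableSet_thicken _ _)).symm
    _ ≤ volume (nbhdG 1 U) := measure_mono hsub

/-- A point within `1` of `Ω \ ⋃ B` either sees its whole `l`-cube inside `Ω \ ⋃ B`, and then a
cube of `G` through it is absorbed by `A`, or it lies within `l` of a point of `∁ Ω` or of a cube
`Q ∈ B`, i.e. near `∂Ω` or in the shell of `Q`. -/
lemma nbhdG_diff_subset {Ω : Set (Fin D → ℝ)} {G B A : Finset ((Fin D → ℝ) × ℝ)} {l r : ℝ}
    (hl : 1 ≤ l) (hlr : l ≤ r) (hcov : Ω ⊆ ⋃ c ∈ G, cube c)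
    (hG : ∀ c ∈ G, 0 ≤ c.2 ∧ c.2 ≤ l)
    (hA : ∀ c ∈ G, cube c ⊆ Ω \ ⋃ Q ∈ B, cube Q → ∃ a ∈ A, cube c ⊆ thicken (2 * a.2) a) :
    nbhdG 1 (Ω \ ⋃ Q ∈ B, cube Q) ⊆
      (⋃ a ∈ A, thicken (2 * a.2) a) ∪ bdryG Ω r ∪ ⋃ Q ∈ B, thicken l Q \ thicken (-1) Q := by
  rintro x ⟨y, hy, hxy⟩
  by_cases! hball : ∀ z, ‖z - x‖ ≤ l → z ∈ Ω \ ⋃ Q ∈ B, cube Q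
  · obtain ⟨c, hc, hxc⟩ := mem_iUnion₂.1 (hcov (hball x (by simp; linarith)).1)
    obtain ⟨a, ha, hca⟩ := hA c hc fun z hz =>
      hball z ((norm_sub_le_of_mem_cube (hG c hc).1 hxc hz).trans (hG c hc).2)
    exact Or.inl (Or.inl (mem_iUnion₂.2 ⟨a, ha, hca hxc⟩))
  obtain ⟨z, hzx, hz⟩ := hball
  by_cases hzΩ : z ∈ Ω
  · obtain ⟨Q, hQ, hzQ⟩ := mem_iUnion₂.1 (not_not.1 fun h => hz ⟨hzΩ, h⟩)
    refine Or.inr (mem_iUnion₂.2 ⟨Q, hQ, ?_, fun hxQ => hy.2 (mem_iUnion₂.2 ⟨Q, hQ, ?_⟩)⟩)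
    · have hzQ : z ∈ thicken 0 Q := by rwa [thicken_zero]
      simpa using mem_thicken_of_norm_sub_le hzQ (by rwa [norm_sub_rev])
    · have := mem_thicken_of_norm_sub_le (s := 1) hxQ (by rwa [norm_sub_rev])
      rwa [neg_add_cancel, thicken_zero] at this
  · exact Or.inl (Or.inr ⟨y, hy.1, z, hzΩ, hxy.trans (hl.trans hlr),
      by rw [norm_sub_rev]; exact hzx.trans hlr⟩)

lemma volume_biUnion_shell_le {Ω : Set (Fin D → ℝ)} {B : Finset ((Fin D → ℝ) × ℝ)} {κ l : ℝ}
    (hκ : 2 ≤ κ) (hl : 1 ≤ l) (hB : (B : Set ((Fin D → ℝ) × ℝ)).PairwiseDisjoint cube)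
    (hBΩ : ∀ Q ∈ B, cube Q ⊆ Ω) (hBside : ∀ Q ∈ B, κ * l ≤ Q.2) :
    volume (⋃ Q ∈ B, thicken l Q \ thicken (-1) Q) ≤
      ENNReal.ofReal (shellRatio D κ) * volume Ω :=
  calc volume (⋃ Q ∈ B, thicken l Q \ thicken (-1) Q)
      ≤ ∑ Q ∈ B, ENNReal.ofReal (shellRatio D κ) * volume (cube Q) :=
        (measure_biUnion_finset_le _ _).trans
          (Finset.sum_le_sum fun Q hQ => volume_shell_le hκ hl (hBside Q hQ))
    _ = ENNReal.ofReal (shellRatio D κ) * volume (⋃ Q ∈ B, cube Q) := by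
        rw [← Finset.mul_sum, measure_biUnion_finset hB fun Q _ => by
          rw [← thicken_zero]; exact measurableSet_thicken _ _]
    _ ≤ ENNReal.ofReal (shellRatio D κ) * volume Ω := by
        gcongr; exact iUnion₂_subset hBΩ

lemma ofReal_one_sub_add_ofReal {c : ℝ} (hc₀ : 0 ≤ c) (hc₁ : c ≤ 1) :
    ENNReal.ofReal (1 - c) + ENNReal.ofReal c = 1 := by
  rw [← ENNReal.ofReal_add (by linarith) hc₀, sub_add_cancel, ENNReal.ofReal_one]

lemma le_one_sub_mul_add_mul_of_add_mul_le {N N' U E : ℝ≥0∞} {c : ℝ} (hc₀ : 0 ≤ c)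
    (hc₁ : c ≤ 1) (hN : N ≠ ∞)
    (h₁ : N' + ENNReal.ofReal c * U ≤ N) (h₂ : N ≤ U + E) :
    N' ≤ ENNReal.ofReal (1 - c) * N + ENNReal.ofReal c * E := by
  refine ENNReal.le_of_add_le_add_right (a := ENNReal.ofReal c * N)
    (ENNReal.mul_ne_top ENNReal.ofReal_ne_top hN) ?_
  calc N' + ENNReal.ofReal c * N ≤ N' + ENNReal.ofReal c * U + ENNReal.ofReal c * E := by
        rw [add_assoc, ← mul_add]; gcongr
    _ ≤ N + ENNReal.ofReal c * E := by gcongr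
    _ = ENNReal.ofReal (1 - c) * N + ENNReal.ofReal c * E + ENNReal.ofReal c * N := by
        rw [add_right_comm, ← add_mul, ofReal_one_sub_add_ofReal hc₀ hc₁, one_mul]

lemma exists_extend_packing {Ω : Set (Fin D → ℝ)} {G B : Finset ((Fin D → ℝ) × ℝ)} {κ l r : ℝ}
    (hκ : 2 ≤ κ) (hl : 1 ≤ l) (hlr : l ≤ r) (hΩ : IsBounded Ω) (hcov : Ω ⊆ ⋃ c ∈ G, cube c)
    (hG : ∀ c ∈ G, 4 ≤ c.2 ∧ c.2 ≤ l) (hB : (B : Set ((Fin D → ℝ) × ℝ)).PairwiseDisjoint cube)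
    (hBΩ : ∀ Q ∈ B, cube Q ⊆ Ω) (hBside : ∀ Q ∈ B, κ * l ≤ Q.2) :
    ∃ A ⊆ G, ((B ∪ A : Finset ((Fin D → ℝ) × ℝ)) : Set ((Fin D → ℝ) × ℝ)).PairwiseDisjoint cube ∧
      (∀ a ∈ A, cube a ⊆ Ω) ∧
      volume (nbhdG 1 (Ω \ ⋃ c ∈ B ∪ A, cube c)) ≤
        ENNReal.ofReal (1 - densityConst D) * volume (nbhdG 1 (Ω \ ⋃ Q ∈ B, cube Q)) +
        ENNReal.ofReal (densityConst D) *
          (volume (bdryG Ω r) + ENNReal.ofReal (shellRatio D κ) * volume Ω) := by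
  classical
  have hG₀ : ∀ c ∈ G, 0 ≤ c.2 := fun c hc => by linarith [(hG c hc).1]
  set Ω' := Ω \ ⋃ Q ∈ B, cube Q
  set F := G.filter (cube · ⊆ Ω')
  have hFG : ∀ c ∈ (F : Set ((Fin D → ℝ) × ℝ)), c ∈ G := fun c hc => (Finset.mem_filter.1 hc).1
  obtain ⟨u, huF, hu, habsorb⟩ := Vitali.exists_disjoint_subfamily_covering_enlargement cube
    (F : Set ((Fin D → ℝ) × ℝ)) Prod.snd 2 one_lt_two (fun c hc => hG₀ c (hFG c hc)) l
    (fun c hc => (hG c (hFG c hc)).2)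
    (fun c hc => ⟨c.1, fun i => ⟨le_rfl, by linarith [hG₀ c (hFG c hc)]⟩⟩)
  obtain ⟨A, rfl⟩ := (F.finite_toSet.subset huF).exists_finset_coe
  have hAF : A ⊆ F := Finset.coe_subset.1 huF
  have hAG : A ⊆ G := hAF.trans (Finset.filter_subset _ _)
  have hAΩ' : ∀ a ∈ A, cube a ⊆ Ω' := fun a ha => (Finset.mem_filter.1 (hAF ha)).2
  refine ⟨A, hAG, ?_, fun a ha => (hAΩ' a ha).trans sdiff_subset, ?_⟩
  · rw [Finset.coe_union, pairwiseDisjoint_union]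
    exact ⟨hB, hu, fun Q hQ a ha _ => Set.disjoint_right.2 fun x hxa hxQ =>
      (hAΩ' a ha hxa).2 (mem_iUnion₂.2 ⟨Q, hQ, hxQ⟩)⟩
  have hcover := nbhdG_diff_subset (A := A) hl hlr hcov (fun c hc => ⟨hG₀ c hc, (hG c hc).2⟩)
    fun c hc hcΩ' => by
      obtain ⟨a, ha, hmeet, hca⟩ := habsorb c (Finset.mem_filter.2 ⟨hc, hcΩ'⟩)
      exact ⟨a, ha, cube_subset_thicken_of_inter (hG₀ c hc) hca hmeet⟩
  rw [Finset.set_biUnion_union, ← sdiff_sdiff]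
  refine le_one_sub_mul_add_mul_of_add_mul_le densityConst_pos.le densityConst_le_one
    (isBounded_nbhdG (hΩ.subset sdiff_subset)).measure_lt_top.ne
    (volume_nbhdG_diff_add_le hu hAΩ' fun a ha => (hG a (hAG ha)).1) ?_
  calc volume (nbhdG 1 Ω')
      ≤ volume (⋃ a ∈ A, thicken (2 * a.2) a) + (volume (bdryG Ω r) +
          volume (⋃ Q ∈ B, thicken l Q \ thicken (-1) Q)) := by
        refine (measure_mono hcover).trans ((measure_union_le _ _).trans ?_)
        rw [← add_assoc]
        gcongr
        exact measure_union_le _ _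
    _ ≤ _ := by gcongr; exact volume_biUnion_shell_le hκ hl hB hBΩ hBside

lemma exists_packing_of_levels {ι : Type*} [LinearOrder ι] {Ω : Set (Fin D → ℝ)}
    {C : ι → Finset ((Fin D → ℝ) × ℝ)} {l : ι → ℝ} {κ r : ℝ} (S : Finset ι)
    (hκ : 2 ≤ κ) (hΩ : IsBounded Ω) (hcov : ∀ k ∈ S, Ω ⊆ ⋃ c ∈ C k, cube c)
    (hl : ∀ k ∈ S, 1 ≤ l k ∧ l k ≤ r) (hside : ∀ k ∈ S, ∀ c ∈ C k, 4 ≤ c.2 ∧ c.2 ≤ l k)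
    (hsep : ∀ i ∈ S, ∀ j ∈ S, i < j → ∀ c ∈ C j, κ * l i ≤ c.2) :
    ∃ A : Finset ((Fin D → ℝ) × ℝ), (∀ c ∈ A, ∃ k ∈ S, c ∈ C k) ∧
      (A : Set ((Fin D → ℝ) × ℝ)).PairwiseDisjoint cube ∧ (∀ c ∈ A, cube c ⊆ Ω) ∧
      volume (nbhdG 1 (Ω \ ⋃ c ∈ A, cube c)) ≤
        ENNReal.ofReal (1 - densityConst D) ^ S.card * volume (nbhdG 1 Ω) +
          (volume (bdryG Ω r) + ENNReal.ofReal (shellRatio D κ) * volume Ω) := by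
  classical
  induction S using Finset.induction_on_min with
  | empty => exact ⟨∅, by simp, by simp, by simp, by simp⟩
  | insert k S hkS ih =>
    have hk := Finset.mem_insert_self k S
    have hS {j} (hj : j ∈ S) : j ∈ insert k S := Finset.mem_insert_of_mem hj
    obtain ⟨B, hBC, hB, hBΩ, hBvol⟩ := ih (fun j hj => hcov j (hS hj)) (fun j hj => hl j (hS hj))
      (fun j hj => hside j (hS hj)) fun i hi j hj => hsep i (hS hi) j (hS hj)
    obtain ⟨A, hAC, hBA, hAΩ, hvol⟩ := exists_extend_packing hκ (hl k hk).1 (hl k hk).2 hΩ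
      (hcov k hk) (hside k hk) hB hBΩ fun Q hQ => by
        obtain ⟨j, hj, hQj⟩ := hBC Q hQ
        exact hsep k hk j (hS hj) (hkS j hj) Q hQj
    refine ⟨B ∪ A, fun c hc => ?_, hBA, fun c hc => ?_, hvol.trans ?_⟩
    · rcases Finset.mem_union.1 hc with hc | hc
      · obtain ⟨j, hj, hcj⟩ := hBC c hc
        exact ⟨j, hS hj, hcj⟩
      · exact ⟨k, hk, hAC hc⟩
    · rcases Finset.mem_union.1 hc with hc | hc
      exacts [hBΩ c hc, hAΩ c hc]
    rw [Finset.card_insert_of_notMem fun h => lt_irrefl k (hkS k h)]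
    set E := volume (bdryG Ω r) + ENNReal.ofReal (shellRatio D κ) * volume Ω
    calc _ ≤ ENNReal.ofReal (1 - densityConst D) *
          (ENNReal.ofReal (1 - densityConst D) ^ S.card * volume (nbhdG 1 Ω) + E) +
          ENNReal.ofReal (densityConst D) * E := by gcongr
      _ = ENNReal.ofReal (1 - densityConst D) ^ (S.card + 1) * volume (nbhdG 1 Ω) +
          (ENNReal.ofReal (1 - densityConst D) + ENNReal.ofReal (densityConst D)) * E := by ring
      _ = _ := by rw [ofReal_one_sub_add_ofReal densityConst_pos.le densityConst_le_one, one_mul]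

lemma exists_packing_of_chain {n : ℕ} {Ω : Set (Fin D → ℝ)}
    {C : Fin (n + 1) → Finset ((Fin D → ℝ) × ℝ)} (hn : 3 ≤ n) (hΩ : IsBounded Ω)
    (hpos : ∀ k, ∀ c ∈ C k, 0 < c.2) (h0 : 1 ≤ lmax (C 0))
    (hchain : ∀ k : Fin n, ((n + 1 : ℕ) : ℝ) * lmax (C k.castSucc) ≤ lmin (C k.succ))
    (hcov : ∀ k, Ω ⊆ ⋃ c ∈ C k, cube c) :
    ∃ A : Finset ((Fin D → ℝ) × ℝ), (∀ c ∈ A, ∃ k, c ∈ C k) ∧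
      (A : Set ((Fin D → ℝ) × ℝ)).PairwiseDisjoint cube ∧ (∀ c ∈ A, cube c ⊆ Ω) ∧
      volume (nbhdG 1 (Ω \ ⋃ c ∈ A, cube c)) ≤
        ENNReal.ofReal (1 - densityConst D) ^ n *
            (volume Ω + volume (bdryG Ω (lmax (C (Fin.last n))))) +
          (volume (bdryG Ω (lmax (C (Fin.last n)))) +
            ENNReal.ofReal (shellRatio D (n + 1 : ℕ)) * volume Ω) := by
  set κ : ℝ := ((n + 1 : ℕ) : ℝ)
  have hκ : 4 ≤ κ := by simp only [κ]; norm_cast; omega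
  have hmono : Monotone fun k => lmax (C k) := Fin.monotone_iff_le_succ.2 fun k =>
    calc lmax (C k.castSucc) ≤ κ * lmax (C k.castSucc) :=
          le_mul_of_one_le_left (lmax_nonneg (hpos _)) (by linarith)
      _ ≤ lmax (C k.succ) := (hchain k).trans (lmin_le_lmax _)
  have hsep (k : Fin n) {c} (hc : c ∈ C k.succ) : κ * lmax (C k.castSucc) ≤ c.2 :=
    (hchain k).trans (lmin_le hc)
  have hlast : 1 ≤ lmax (C (Fin.last n)) := h0.trans (hmono (Fin.zero_le _))
  obtain ⟨A, hAC, hA, hAΩ, hvol⟩ := exists_packing_of_levels (C := fun k => C k.succ)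
    (l := fun k => lmax (C k.succ)) (r := lmax (C (Fin.last n))) Finset.univ (by linarith) hΩ
    (fun k _ => hcov _) (fun k _ => ⟨h0.trans (hmono (Fin.zero_le _)), hmono (Fin.le_last _)⟩)
    (fun k _ c hc => ⟨by nlinarith [hsep k hc, h0.trans (hmono (Fin.zero_le k.castSucc))],
      le_lmax hc⟩)
    fun i _ j _ hij c hc => (mul_le_mul_of_nonneg_left (hmono (Fin.succ_le_castSucc_iff.2 hij))
      (by linarith)).trans (hsep j hc)
  refine ⟨A, fun c hc => ?_, hA, hAΩ, hvol.trans ?_⟩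
  · obtain ⟨k, -, hck⟩ := hAC c hc
    exact ⟨k.succ, hck⟩
  rw [Finset.card_univ, Fintype.card_fin]
  gcongr
  exact (measure_mono (nbhdG_subset_union_bdryG hlast Ω)).trans (measure_union_le _ _)

lemma exists_scale (D : ℕ) {ε : ℝ} (hε : 0 < ε) : ∃ n : ℕ, 3 ≤ n ∧
    (1 - densityConst D) ^ n * (1 + ε) ≤ ε ∧ shellRatio D (n + 1 : ℕ) ≤ ε := by
  have hdecay : ∀ᶠ n : ℕ in atTop, (1 - densityConst D) ^ n * (1 + ε) ≤ ε := by
    have := (tendsto_pow_atTop_nhds_zero_of_lt_one (sub_nonneg.2 (densityConst_le_one (D := D)))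
      (sub_lt_self 1 densityConst_pos)).mul_const (1 + ε)
    rw [zero_mul] at this
    exact this.eventually (ge_mem_nhds hε)
  have hshell : ∀ᶠ n : ℕ in atTop, shellRatio D (n + 1 : ℕ) ≤ ε := by
    refine (tendsto_shellRatio.comp (tendsto_natCast_atTop_atTop.comp
      (tendsto_add_atTop_nat 1))).eventually (ge_mem_nhds hε)
  exact ((eventually_ge_atTop 3).and (hdecay.and hshell)).exists

lemma ofReal_pow_mul_add_add_lt {V b : ℝ≥0∞} {ρ δ ε : ℝ} (hV : V ≠ ∞) (hρ : 0 ≤ ρ)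
    (hε : 0 ≤ ε) (hρε : ρ * (1 + ε) ≤ ε) (hδ : δ ≤ ε) (hb : b < ENNReal.ofReal ε * V) :
    ENNReal.ofReal ρ * (V + b) + (b + ENNReal.ofReal δ * V) < ENNReal.ofReal (3 * ε) * V := by
  have hεV : ENNReal.ofReal ε * V ≠ ∞ := ENNReal.mul_ne_top ENNReal.ofReal_ne_top hV
  calc ENNReal.ofReal ρ * (V + b) + (b + ENNReal.ofReal δ * V)
      ≤ ENNReal.ofReal ρ * (V + ENNReal.ofReal ε * V) + (b + ENNReal.ofReal ε * V) := by
        gcongr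
    _ = ENNReal.ofReal (ρ * (1 + ε)) * V + (b + ENNReal.ofReal ε * V) := by
        rw [ENNReal.ofReal_mul hρ, ENNReal.ofReal_add zero_le_one hε, ENNReal.ofReal_one]; ring
    _ < ENNReal.ofReal ε * V + (ENNReal.ofReal ε * V + ENNReal.ofReal ε * V) := by
        refine ENNReal.add_lt_add_of_le_of_lt ?_ ?_ (ENNReal.add_lt_add_right hεV hb)
        · exact ENNReal.mul_ne_top ENNReal.ofReal_ne_top hV
        · gcongr
    _ = ENNReal.ofReal (3 * ε) * V := by
        rw [← add_mul, ← add_mul, ← ENNReal.ofReal_add hε hε, ← ENNReal.ofReal_add hε (by linarith)]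
        ring_nf

end OrnsteinWeiss

open OrnsteinWeiss

/-- Ornstein–Weiss-type tiling lemma (Proposition 2.7 of the paper). -/
theorem stmt8 (D : ℕ) :
    ∀ η : ℝ, 0 < η → ∃ K : ℕ, ∃ hK : 0 < K,
      ∀ (Ω : Set (Fin D → ℝ)), Bornology.IsBounded Ω → MeasurableSet Ω →
      ∀ C : Fin K → Finset ((Fin D → ℝ) × ℝ),
        (∀ k, (C k).Nonempty) →
        (∀ k, ∀ c ∈ C k, 0 < c.2) →
        (1 ≤ lmax (C ⟨0, hK⟩)) →
        (∀ k : Fin K, ∀ h : (k : ℕ) + 1 < K, (K : ℝ) * lmax (C k) ≤ lmin (C ⟨(k : ℕ) + 1, h⟩)) →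
        (volume (bdryG Ω (lmax (C ⟨K - 1, Nat.sub_lt hK Nat.one_pos⟩))) <
          ENNReal.ofReal (η / 3) * volume Ω) →
        (∀ k, Ω ⊆ ⋃ c ∈ C k, cubeG c.1 c.2) →
        ∃ A : Finset ((Fin D → ℝ) × ℝ),
          (∀ c ∈ A, ∃ k, c ∈ C k) ∧
          (∀ c ∈ A, ∀ c' ∈ A, c ≠ c' → Disjoint (cubeG c.1 c.2) (cubeG c'.1 c'.2)) ∧
          (⋃ c ∈ A, cubeG c.1 c.2) ⊆ Ω ∧
          volume (nbhdG 1 (Ω \ ⋃ c ∈ A, cubeG c.1 c.2)) < ENNReal.ofReal η * volume Ω := by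
  intro η hη
  obtain ⟨n, hn, hdecay, hshell⟩ := exists_scale D (by positivity : 0 < η / 3)
  refine ⟨n + 1, n.succ_pos, fun Ω hΩ _ C _ hpos h0 hchain hbdry hcov => ?_⟩
  obtain ⟨A, hAC, hA, hAΩ, hvol⟩ :=
    exists_packing_of_chain hn hΩ hpos h0 (fun k => hchain k.castSucc k.succ.isLt) hcov
  refine ⟨A, hAC, fun c hc c' hc' h => hA hc hc' h, iUnion₂_subset hAΩ, hvol.trans_lt ?_⟩
  rw [← ENNReal.ofReal_pow (sub_nonneg.2 densityConst_le_one)]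
  calc _ < ENNReal.ofReal (3 * (η / 3)) * volume Ω :=
        ofReal_pow_mul_add_add_lt hΩ.measure_lt_top.ne
          (pow_nonneg (sub_nonneg.2 densityConst_le_one) n) (by positivity) hdecay hshell hbdry
    _ = ENNReal.ofReal η * volume Ω := by rw [mul_div_cancel₀ η three_ne_zero]
end

section
/- Let (X,d) be a compact metric space with a continuous ℝ^D-action T. For every ε > 0 and every bounded Borel set Ω ⊆ ℝ^D, #(X, d_Ω, ε) ≤ (#(X, d_{[0,1]^D}, ε/2))^{vol(B₁(Ω))}. -/
open Filter Set MeasureTheory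

/-- `d_Ω(x,y) = sup_{a ∈ Ω} d(Tᵃx, Tᵃy)` for an `ℝ^D`-action `T` and `Ω ⊆ ℝ^D`. -/
noncomputable def dOmR {X : Type*} [MetricSpace X] {D : ℕ} (T : (Fin D → ℝ) → X → X)
    (Ω : Set (Fin D → ℝ)) (x y : X) : ℝ :=
  ⨆ a : Ω, dist (T a x) (T a y)

/-- The cube `[s,t]^D ⊆ ℝ^D`. -/
def cubeR (D : ℕ) (s t : ℝ) : Set (Fin D → ℝ) := {a | ∀ i, a i ∈ Set.Icc s t}

/-- Entropy of `K` at scale `ε`: `limsup_{L→∞} (1/L^D) log #(K, d_{[0,L]^D}, ε)`. -/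
noncomputable def entSR {X : Type*} [MetricSpace X] {D : ℕ} (T : (Fin D → ℝ) → X → X)
    (K : Set X) (ε : ℝ) : ℝ :=
  limsup (fun L : ℝ => Real.log (spanNum (dOmR T (cubeR D 0 L)) K ε) / L ^ D) atTop

/-- The Bowen ball `B_δ(x, d_{ℝ^D})`. -/
def bowenBallR {X : Type*} [MetricSpace X] {D : ℕ} (T : (Fin D → ℝ) → X → X)
    (δ : ℝ) (x : X) : Set X :=
  {y | dOmR T univ x y ≤ δ}

/-- Upper metric mean dimension. -/
noncomputable def mdimMUpperR {X : Type*} [MetricSpace X] {D : ℕ}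
    (T : (Fin D → ℝ) → X → X) : ℝ :=
  limsup (fun ε : ℝ => entSR T univ ε / Real.log (1 / ε)) (nhdsWithin 0 (Set.Ioi 0))

/-- Lower metric mean dimension. -/
noncomputable def mdimMLowerR {X : Type*} [MetricSpace X] {D : ℕ}
    (T : (Fin D → ℝ) → X → X) : ℝ :=
  liminf (fun ε : ℝ => entSR T univ ε / Real.log (1 / ε)) (nhdsWithin 0 (Set.Ioi 0))

/-- The closed `r`-neighborhood of `Ω ⊆ ℝ^D` in the `ℓ^∞` norm. -/
def nbhdR {D : ℕ} (r : ℝ) (Ω : Set (Fin D → ℝ)) : Set (Fin D → ℝ) :=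
  {x | ∃ y ∈ Ω, ‖x - y‖ ≤ r}

/-! Write `ω ∈ Ω` as `⌊ω⌋ + b` with `b ∈ [0,1]^D`, so `T^ω = T^b ∘ T^⌊ω⌋`. Code `x` by
choosing, for each lattice point `a` of `A = ⌊Ω⌋`, a point of a minimal `ε/2`-spanning set for
`d_{[0,1]^D}` that is close to `T^a x`; points with the same code are `ε`-close in `d_Ω`, and there
are at most `#(X, d_{[0,1]^D}, ε/2)^|A|` codes. The unit cells of the points of `A` are disjoint
and lie in `B₁(Ω)`, so `|A| ≤ vol(B₁(Ω))`. -/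

section SpanNum

variable {X : Type*} {ρ : X → X → ℝ} {K : Set X} {ε : ℝ}

lemma spanNum_le_card_s10 (S : Finset X) (hS : ∀ x ∈ K, ∃ y ∈ S, ρ x y ≤ ε) :
    spanNum ρ K ε ≤ S.card :=
  Nat.sInf_le ⟨S, rfl, hS⟩

lemma exists_card_eq_spanNum (h : ∃ S : Finset X, ∀ x ∈ K, ∃ y ∈ S, ρ x y ≤ ε) :
    ∃ S : Finset X, S.card = spanNum ρ K ε ∧ ∀ x ∈ K, ∃ y ∈ S, ρ x y ≤ ε :=
  let ⟨S, hS⟩ := h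
  Nat.sInf_mem (s := {n | ∃ S : Finset X, S.card = n ∧ ∀ x ∈ K, ∃ y ∈ S, ρ x y ≤ ε})
    ⟨S.card, S, rfl, hS⟩

lemma spanNum_le_card_of_code {C : Type*} [Fintype C] (φ : X → C)
    (hφ : ∀ x y, φ x = φ y → ρ x y ≤ ε) : spanNum ρ K ε ≤ Fintype.card C := by
  classical
  calc spanNum ρ K ε ≤ (Finset.univ.image (Set.rangeSplitting φ)).card := by
        refine spanNum_le_card_s10 _ fun x _ => ⟨_, Finset.mem_image_of_mem _
          (Finset.mem_univ (⟨φ x, Set.mem_range_self x⟩ : Set.range φ)), hφ _ _ ?_⟩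
        exact (Set.apply_rangeSplitting φ ⟨φ x, Set.mem_range_self x⟩).symm
    _ ≤ Fintype.card (Set.range φ) := Finset.card_image_le
    _ ≤ Fintype.card C := Fintype.card_subtype_le _

end SpanNum

section dOmR

variable {X : Type*} [MetricSpace X] {D : ℕ} (T : (Fin D → ℝ) → X → X)

lemma dist_le_dOmR [CompactSpace X] {Ω : Set (Fin D → ℝ)} {b : Fin D → ℝ} (hb : b ∈ Ω)
    (x y : X) : dist (T b x) (T b y) ≤ dOmR T Ω x y := by
  refine le_ciSup (f := fun a : Ω => dist (T a x) (T a y))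
    ⟨Metric.diam (univ : Set X), ?_⟩ ⟨b, hb⟩
  rintro r ⟨a, rfl⟩
  exact Metric.dist_le_diam_of_mem isCompact_univ.isBounded trivial trivial

lemma dOmR_le {Ω : Set (Fin D → ℝ)} {x y : X} {ε : ℝ} (hε : 0 ≤ ε)
    (h : ∀ a ∈ Ω, dist (T a x) (T a y) ≤ ε) : dOmR T Ω x y ≤ ε :=
  Real.iSup_le (fun a => h a a.2) hε

lemma exists_finset_dOmR_le [CompactSpace X]
    (hTc : Continuous fun p : (Fin D → ℝ) × X => T p.1 p.2)
    {Ω : Set (Fin D → ℝ)} (hΩ : IsCompact Ω) {δ : ℝ} (hδ : 0 < δ) :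
    ∃ S : Finset X, ∀ x : X, ∃ y ∈ S, dOmR T Ω x y ≤ δ := by
  have hunif : UniformContinuousOn (fun p : (Fin D → ℝ) × X => T p.1 p.2) (Ω ×ˢ univ) :=
    (hΩ.prod isCompact_univ).uniformContinuousOn_of_continuous hTc.continuousOn
  obtain ⟨η, hη, hclose⟩ := Metric.uniformContinuousOn_iff.mp hunif δ hδ
  obtain ⟨S, hS⟩ := isCompact_univ.elim_finite_subcover (fun c : X => Metric.ball c η)
    (fun _ => Metric.isOpen_ball) fun x _ => mem_iUnion.mpr ⟨x, Metric.mem_ball_self hη⟩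
  refine ⟨S, fun x => ?_⟩
  obtain ⟨y, hy, hxy⟩ := mem_iUnion₂.mp (hS (mem_univ x))
  refine ⟨y, hy, ?_⟩
  refine dOmR_le T hδ.le fun a ha => (hclose (a, x) ⟨ha, trivial⟩ (a, y) ⟨ha, trivial⟩ ?_).le
  simpa [Prod.dist_eq, hη] using hxy

end dOmR

lemma isCompact_cubeR (D : ℕ) (s t : ℝ) : IsCompact (cubeR D s t) := by
  have : cubeR D s t = Set.pi univ fun _ => Icc s t := by
    ext a
    simp [cubeR, Pi.le_def, forall_and]
  exact this ▸ isCompact_univ_pi fun _ => isCompact_Icc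

section Lattice

variable {D : ℕ}

noncomputable def latticeFloor (ω : Fin D → ℝ) : Fin D → ℤ := fun i => ⌊ω i⌋

lemma latticeFloor_preimage_singleton (a : Fin D → ℤ) :
    latticeFloor ⁻¹' {a} = Set.pi univ fun i => Ico (a i : ℝ) (a i + 1) := by
  ext x
  simp [latticeFloor, funext_iff, ← Int.preimage_floor_singleton]

lemma volume_latticeFloor_preimage_singleton (a : Fin D → ℤ) :
    volume (latticeFloor ⁻¹' {a}) = 1 := by
  simp [latticeFloor_preimage_singleton, volume_pi_pi, Real.volume_Ico]

lemma norm_sub_le_one_of_latticeFloor_eq {x y : Fin D → ℝ} (h : latticeFloor x = latticeFloor y) :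
    ‖x - y‖ ≤ 1 := by
  refine (pi_norm_le_iff_of_nonneg zero_le_one).mpr fun i => ?_
  exact (Int.abs_sub_lt_one_of_floor_eq_floor (congrFun h i)).le

lemma finite_latticeFloor_image {Ω : Set (Fin D → ℝ)} (hΩ : Bornology.IsBounded Ω) :
    (latticeFloor '' Ω).Finite := by
  obtain ⟨R, hR⟩ := hΩ.exists_norm_le
  refine (Set.Finite.pi fun _ : Fin D => Set.finite_Icc ⌊-R⌋ ⌊R⌋).subset ?_
  rintro _ ⟨ω, hω, rfl⟩ i -
  have hωi : |ω i| ≤ R := (norm_le_pi_norm ω i).trans (hR ω hω)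
  exact ⟨Int.floor_mono (abs_le.mp hωi).1, Int.floor_mono (abs_le.mp hωi).2⟩

lemma volume_nbhdR_lt_top {Ω : Set (Fin D → ℝ)} (hΩ : Bornology.IsBounded Ω) (r : ℝ) :
    volume (nbhdR r Ω) < ⊤ := by
  refine (hΩ.cthickening (δ := r)).measure_lt_top.trans_le' (measure_mono ?_)
  rintro x ⟨y, hy, hxy⟩
  exact Metric.mem_cthickening_of_dist_le x y r Ω hy (by rwa [dist_eq_norm])

lemma card_latticeFloor_image_le_volume_nbhdR {Ω : Set (Fin D → ℝ)}
    (hΩ : Bornology.IsBounded Ω) :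
    ((finite_latticeFloor_image hΩ).toFinset.card : ℝ) ≤ (volume (nbhdR 1 Ω)).toReal := by
  set A := (finite_latticeFloor_image hΩ).toFinset
  have hcells : latticeFloor ⁻¹' (A : Set (Fin D → ℤ)) ⊆ nbhdR 1 Ω := by
    intro x hx
    obtain ⟨ω, hω, hωx⟩ := (finite_latticeFloor_image hΩ).mem_toFinset.mp hx
    exact ⟨ω, hω, norm_sub_le_one_of_latticeFloor_eq hωx.symm⟩
  have hvol : volume (latticeFloor ⁻¹' (A : Set (Fin D → ℤ))) = A.card := by
    rw [← sum_measure_preimage_singleton A fun a _ => ?_]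
    · simp [volume_latticeFloor_preimage_singleton]
    · rw [latticeFloor_preimage_singleton]
      exact MeasurableSet.univ_pi fun _ => measurableSet_Ico
  have := ENNReal.toReal_mono (volume_nbhdR_lt_top hΩ 1).ne (hvol ▸ measure_mono hcells)
  simpa using this

end Lattice

lemma spanNum_dOmR_le_pow_card {X : Type*} [MetricSpace X] [CompactSpace X] {D : ℕ}
    (T : (Fin D → ℝ) → X → X) (hTadd : ∀ (a b : Fin D → ℝ) (x : X), T (a + b) x = T a (T b x))
    {ε : ℝ} (hε : 0 ≤ ε) {Ω : Set (Fin D → ℝ)} (A : Finset (Fin D → ℤ))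
    (hA : ∀ ω ∈ Ω, latticeFloor ω ∈ A) (S : Finset X)
    (hS : ∀ x : X, ∃ y ∈ S, dOmR T (cubeR D 0 1) x y ≤ ε / 2) :
    spanNum (dOmR T Ω) univ ε ≤ S.card ^ A.card := by
  choose center hcenter_mem hcenter using hS
  let shift : (Fin D → ℤ) → Fin D → ℝ := fun a i => a i
  let φ : X → A → S := fun x a => ⟨center (T (shift a) x), hcenter_mem _⟩
  have hcode : ∀ x y, φ x = φ y → dOmR T Ω x y ≤ ε := by
    intro x y hxy
    refine dOmR_le T hε fun ω hω => ?_
    let a : A := ⟨latticeFloor ω, hA ω hω⟩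
    let b : Fin D → ℝ := fun i => Int.fract (ω i)
    have hb : b ∈ cubeR D 0 1 := fun i => ⟨Int.fract_nonneg _, (Int.fract_lt_one _).le⟩
    have hsplit : ∀ z, T ω z = T b (T (shift a) z) := fun z => by
      rw [← hTadd]
      congr 1
      funext i
      exact (Int.fract_add_floor (ω i)).symm
    have hsame : center (T (shift a) y) = center (T (shift a) x) :=
      congrArg Subtype.val (congrFun hxy a).symm
    calc dist (T ω x) (T ω y)
        ≤ dist (T b (T (shift a) x)) (T b (center (T (shift a) x)))
          + dist (T b (T (shift a) y)) (T b (center (T (shift a) y))) := by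
          rw [hsplit, hsplit, hsame]
          exact dist_triangle_right _ _ _
      _ ≤ ε / 2 + ε / 2 := add_le_add ((dist_le_dOmR T hb _ _).trans (hcenter _))
          ((dist_le_dOmR T hb _ _).trans (hcenter _))
      _ = ε := add_halves ε
  simpa using spanNum_le_card_of_code (K := univ) φ hcode

theorem stmt10_general {X : Type*} [MetricSpace X] [CompactSpace X] {D : ℕ}
    (T : (Fin D → ℝ) → X → X)
    (hTc : Continuous fun p : (Fin D → ℝ) × X => T p.1 p.2)
    (hTadd : ∀ (a b : Fin D → ℝ) (x : X), T (a + b) x = T a (T b x))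
    (ε : ℝ) (hε : 0 < ε) (Ω : Set (Fin D → ℝ))
    (hΩ : Bornology.IsBounded Ω) :
    (spanNum (dOmR T Ω) (univ : Set X) ε : ℝ) ≤
      (spanNum (dOmR T (cubeR D 0 1)) (univ : Set X) (ε / 2) : ℝ) ^
        (volume (nbhdR 1 Ω)).toReal := by
  obtain ⟨S, hScard, hS⟩ := exists_card_eq_spanNum (K := univ)
    ((exists_finset_dOmR_le T hTc (isCompact_cubeR D 0 1) (half_pos hε)).imp
      fun S hS x _ => hS x)
  set A := (finite_latticeFloor_image hΩ).toFinset
  have hcount := spanNum_dOmR_le_pow_card T hTadd hε.le A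
    (fun ω hω => (finite_latticeFloor_image hΩ).mem_toFinset.mpr ⟨ω, hω, rfl⟩) S
    fun x => hS x trivial
  rcases isEmpty_or_nonempty X with hX | ⟨⟨x⟩⟩
  · have hzero : spanNum (dOmR T Ω) univ ε = 0 :=
      Nat.le_zero.mp (spanNum_le_card_s10 ∅ fun x => isEmptyElim x)
    rw [hzero, Nat.cast_zero]
    positivity
  have hS_pos : 1 ≤ (S.card : ℝ) := by
    obtain ⟨y, hy, -⟩ := hS x trivial
    exact_mod_cast Finset.card_pos.mpr ⟨y, hy⟩
  rw [← hScard]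
  calc (spanNum (dOmR T Ω) univ ε : ℝ) ≤ (S.card : ℝ) ^ (A.card : ℝ) := by
        rw [Real.rpow_natCast]
        exact_mod_cast hcount
    _ ≤ (S.card : ℝ) ^ (volume (nbhdR 1 Ω)).toReal :=
        Real.rpow_le_rpow_of_exponent_le hS_pos (card_latticeFloor_image_le_volume_nbhdR hΩ)

theorem stmt10 {X : Type*} [MetricSpace X] [CompactSpace X] {D : ℕ}
    (T : (Fin D → ℝ) → X → X)
    (hTc : Continuous fun p : (Fin D → ℝ) × X => T p.1 p.2)
    (hT0 : ∀ x : X, T 0 x = x)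
    (hTadd : ∀ (a b : Fin D → ℝ) (x : X), T (a + b) x = T a (T b x))
    (ε : ℝ) (hε : 0 < ε) (Ω : Set (Fin D → ℝ))
    (hΩ : Bornology.IsBounded Ω) (hΩm : MeasurableSet Ω) :
    (spanNum (dOmR T Ω) (univ : Set X) ε : ℝ) ≤
      (spanNum (dOmR T (cubeR D 0 1)) (univ : Set X) (ε / 2) : ℝ) ^
        (volume (nbhdR 1 Ω)).toReal :=
  stmt10_general T hTc hTadd ε hε Ω hΩ
end
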